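/- arXiv:1404.3055 — 7 statements merged into one kernel-verified Lean document; each statement's English description precedes it below -/
import Mathlib

section
/- Let m ≥ 1 be an integer and let u, v¹, …, vᵐ : ℝ² → ℝ be smooth functions of (x,t) with v^k(x,t) > 0 for all (x,t) and all k. Then u, v¹, …, vᵐ satisfy the system (W) if and only if for every (x,t) and every real p ∉ {0, −v¹(x,t), …, −vᵐ(x,t)} the following identity of rational functions of p holds: u_t + Σ_{k=1}^m v^k_t/(p+v^k) = (p + u)·(u_x + Σ_{k=1}^m v^k_x/(p+v^k)) − u_x·p·(1 − Σ_{k=1}^m v^k/(p·(p+v^k))). -/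
open Finset Filter Topology

/-- Partial derivative with respect to the first (space) variable. -/
noncomputable def pdx (f : ℝ → ℝ → ℝ) (x t : ℝ) : ℝ := deriv (fun y => f y t) x

/-- Partial derivative with respect to the second (time) variable. -/
noncomputable def pdt (f : ℝ → ℝ → ℝ) (x t : ℝ) : ℝ := deriv (fun s => f x s) t

/-- Space partial derivative as a function on the plane, via the full Fréchet derivative. -/
noncomputable def Pdx (f : ℝ → ℝ → ℝ) (q : ℝ × ℝ) : ℝ :=
  fderiv ℝ (fun r : ℝ × ℝ => f r.1 r.2) q (1, 0)

/-- Time partial derivative as a function on the plane, via the full Fréchet derivative. -/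
noncomputable def Pdt (f : ℝ → ℝ → ℝ) (q : ℝ × ℝ) : ℝ :=
  fderiv ℝ (fun r : ℝ × ℝ => f r.1 r.2) q (0, 1)

lemma pdx_eq_Pdx (f : ℝ → ℝ → ℝ) (hf : ContDiff ℝ (⊤ : ℕ∞) (fun q : ℝ × ℝ => f q.1 q.2))
    (x t : ℝ) : pdx f x t = Pdx f (x, t) := by
  have hg : HasDerivAt (fun y : ℝ => ((y, t) : ℝ × ℝ)) (1, 0) x :=
    (hasDerivAt_id x).prodMk (hasDerivAt_const x t)
  have hF : HasFDerivAt (fun r : ℝ × ℝ => f r.1 r.2)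
      (fderiv ℝ (fun r : ℝ × ℝ => f r.1 r.2) (x, t)) (x, t) :=
    (hf.differentiable (by simp) (x, t)).hasFDerivAt
  have := hF.comp_hasDerivAt x hg
  exact this.deriv

lemma pdt_eq_Pdt (f : ℝ → ℝ → ℝ) (hf : ContDiff ℝ (⊤ : ℕ∞) (fun q : ℝ × ℝ => f q.1 q.2))
    (x t : ℝ) : pdt f x t = Pdt f (x, t) := by
  have hg : HasDerivAt (fun s : ℝ => ((x, s) : ℝ × ℝ)) (0, 1) t :=
    (hasDerivAt_const t x).prodMk (hasDerivAt_id t)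
  have hF : HasFDerivAt (fun r : ℝ × ℝ => f r.1 r.2)
      (fderiv ℝ (fun r : ℝ × ℝ => f r.1 r.2) (x, t)) (x, t) :=
    (hf.differentiable (by simp) (x, t)).hasFDerivAt
  have := hF.comp_hasDerivAt t hg
  exact this.deriv

lemma continuous_Pdx (f : ℝ → ℝ → ℝ) (hf : ContDiff ℝ (⊤ : ℕ∞) (fun q : ℝ × ℝ => f q.1 q.2)) :
    Continuous (Pdx f) :=
  (hf.continuous_fderiv (by simp)).clm_apply continuous_const

lemma continuous_Pdt (f : ℝ → ℝ → ℝ) (hf : ContDiff ℝ (⊤ : ℕ∞) (fun q : ℝ × ℝ => f q.1 q.2)) :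
    Continuous (Pdt f) :=
  (hf.continuous_fderiv (by simp)).clm_apply continuous_const

/-- Algebraic reformulation of the Lax identity at a single point and single `p`. -/
lemma form_eq (m : ℕ) (A B c p : ℝ) (a b w : Fin m → ℝ)
    (hp : p ≠ 0) (hw : ∀ k, p + w k ≠ 0) :
    (A + ∑ k : Fin m, a k / (p + w k) =
      (p + c) * (B + ∑ k : Fin m, b k / (p + w k)) -
        B * p * (1 - ∑ k : Fin m, w k / (p * (p + w k)))) ↔
    (A - c * B - ∑ k : Fin m, b k) +
      ∑ k : Fin m, (a k - (c - w k) * b k - B * w k) / (p + w k) = 0 := by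
  have key : ∀ k ∈ (univ : Finset (Fin m)),
      (a k - (c - w k) * b k - B * w k) / (p + w k)
        = a k / (p + w k) - (p + c) * (b k / (p + w k))
            - B * p * (w k / (p * (p + w k))) + b k := by
    intro k _
    have h1 := hw k
    field_simp
    ring
  have E : (A + ∑ k : Fin m, a k / (p + w k)) -
      ((p + c) * (B + ∑ k : Fin m, b k / (p + w k)) -
        B * p * (1 - ∑ k : Fin m, w k / (p * (p + w k)))) =
      (A - c * B - ∑ k : Fin m, b k) +
        ∑ k : Fin m, (a k - (c - w k) * b k - B * w k) / (p + w k) := by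
    rw [Finset.sum_congr rfl key]
    simp only [Finset.sum_add_distrib, Finset.sum_sub_distrib, ← Finset.mul_sum]
    ring
  rw [← sub_eq_zero, E]

/-- Extraction of the residues: if `C + ∑ dₖ/(p+wₖ) = 0` for all admissible `p`,
then `C = 0` and the fiberwise sums of the `dₖ` vanish. -/
lemma extract {m : ℕ} (C : ℝ) (d w : Fin m → ℝ) (hw : ∀ k, 0 < w k)
    (h : ∀ p : ℝ, p ≠ 0 → (∀ k, p ≠ -w k) → C + ∑ k : Fin m, d k / (p + w k) = 0) :
    C = 0 ∧ ∀ k0, ∑ k ∈ Finset.univ.filter (fun k => w k = w k0), d k = 0 := by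
  have hgroup : ∀ k0, ∑ k ∈ Finset.univ.filter (fun k => w k = w k0), d k = 0 := by
    intro k0
    set w0 := w k0 with hw0def
    set F : Finset (Fin m) := Finset.univ.filter (fun k => w k = w0) with hF
    set F' : Finset (Fin m) := Finset.univ.filter (fun k => ¬ w k = w0) with hF'
    set G : ℝ → ℝ := fun p =>
      (p + w0) * C + (∑ k ∈ F, d k) + (p + w0) * ∑ k ∈ F', d k / (p + w k) with hG
    have hU : (Set.Iio (0 : ℝ) ∩ ⋂ k ∈ F', {-w k}ᶜ) ∈ 𝓝 (-w0) := by
      apply IsOpen.mem_nhds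
      · exact isOpen_Iio.inter (isOpen_biInter_finset fun k _ => isOpen_compl_singleton)
      constructor
      · simp only [Set.mem_Iio]
        rw [hw0def]
        linarith [hw k0]
      · simp only [Set.mem_iInter, Set.mem_compl_iff, Set.mem_singleton_iff]
        intro k hk
        have hkne : ¬ w k = w0 := by
          have := (Finset.mem_filter.mp hk).2
          exact this
        intro hc
        exact hkne (by linarith [neg_injective hc])
    have hev : ∀ᶠ p in 𝓝[≠] (-w0), G p = 0 := by
      filter_upwards [mem_nhdsWithin_of_mem_nhds hU, self_mem_nhdsWithin] with p hpU hpne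
      have hpw0 : p + w0 ≠ 0 := by
        intro hc
        exact hpne (by simp only [Set.mem_singleton_iff]; linarith)
      have hp0 : p ≠ 0 := ne_of_lt hpU.1
      have hpk : ∀ k, p ≠ -w k := by
        intro k
        by_cases hk : w k = w0
        · rw [hk]; intro hc; exact hpw0 (by linarith)
        · have : p ∈ ({-w k}ᶜ : Set ℝ) := by
            have := hpU.2
            simp only [Set.mem_iInter] at this
            exact this k (by simp [hF', hk])
          simpa using this
      have hnz : ∀ k, p + w k ≠ 0 := by
        intro k hc; exact hpk k (by linarith)
      have h0 := h p hp0 hpk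
      have hsplitsum : ∑ k : Fin m, d k / (p + w k)
          = (∑ k ∈ F, d k / (p + w k)) + ∑ k ∈ F', d k / (p + w k) := by
        rw [hF, hF']
        exact (Finset.sum_filter_add_sum_filter_not _ _ _).symm
      have hFsum : (p + w0) * ∑ k ∈ F, d k / (p + w k) = ∑ k ∈ F, d k := by
        rw [Finset.mul_sum]
        apply Finset.sum_congr rfl
        intro k hk
        have hkw : w k = w0 := (Finset.mem_filter.mp hk).2
        rw [hkw]
        field_simp
      have : G p = (p + w0) * (C + ∑ k : Fin m, d k / (p + w k)) := by
        rw [hG, hsplitsum, mul_add, mul_add, hFsum]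
        ring
      rw [this, h0, mul_zero]
    have hcont : Tendsto G (𝓝[≠] (-w0)) (𝓝 (G (-w0))) := by
      have hGc : ContinuousAt G (-w0) := by
        have hsum : ContinuousAt (fun p : ℝ => ∑ k ∈ F', d k / (p + w k)) (-w0) := by
          apply tendsto_finset_sum
          intro k hk
          have hkne : ¬ w k = w0 := (Finset.mem_filter.mp hk).2
          have hden : -w0 + w k ≠ 0 := by
            intro hc; exact hkne (by linarith)
          exact (continuousAt_const.div (continuousAt_id.add continuousAt_const) hden)
        exact (((continuousAt_id.add continuousAt_const).mul continuousAt_const).add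
          continuousAt_const).add ((continuousAt_id.add continuousAt_const).mul hsum)
      exact hGc.continuousWithinAt
    have hzero : Tendsto G (𝓝[≠] (-w0)) (𝓝 0) :=
      (tendsto_congr' hev).mpr tendsto_const_nhds
    have huniq : G (-w0) = 0 := tendsto_nhds_unique hcont hzero
    have hGval : G (-w0) = ∑ k ∈ F, d k := by
      rw [hG]
      simp only [neg_add_cancel, zero_mul]
      ring
    rw [hGval] at huniq
    exact huniq
  refine ⟨?_, hgroup⟩
  have hpk : ∀ k, (1 : ℝ) ≠ -w k := by
    intro k hc; have := hw k; linarith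
  have h1 := h 1 one_ne_zero hpk
  have hz : ∑ k : Fin m, d k / (1 + w k) = 0 := by
    have hmaps : ∀ k ∈ (univ : Finset (Fin m)), w k ∈ Finset.univ.image w := by
      intro k _; exact Finset.mem_image_of_mem w (Finset.mem_univ k)
    rw [← Finset.sum_fiberwise_of_maps_to hmaps (fun k => d k / (1 + w k))]
    apply Finset.sum_eq_zero
    intro b hb
    obtain ⟨k0, _, hk0⟩ := Finset.mem_image.mp hb
    have heq : ∀ k ∈ Finset.univ.filter (fun k => w k = b),
        d k / (1 + w k) = d k * (1 + b)⁻¹ := by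
      intro k hk
      rw [(Finset.mem_filter.mp hk).2, div_eq_mul_inv]
    rw [Finset.sum_congr rfl heq, ← Finset.sum_mul]
    have : Finset.univ.filter (fun k => w k = b)
        = Finset.univ.filter (fun k => w k = w k0) := by rw [hk0]
    rw [this, hgroup k0, zero_mul]
  linarith [h1, hz]

/-- the system (W) holds iff the dispersionless Lax identity
`L_t = {B, L}` holds as an identity of rational functions of `p`, for all
`p ∉ {0, -v¹, …, -vᵐ}`. -/
theorem statement0 (m : ℕ) (hm : 1 ≤ m)
    (u : ℝ → ℝ → ℝ) (v : Fin m → ℝ → ℝ → ℝ)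
    (hu : ContDiff ℝ (⊤ : ℕ∞) (fun q : ℝ × ℝ => u q.1 q.2))
    (hv : ∀ k, ContDiff ℝ (⊤ : ℕ∞) (fun q : ℝ × ℝ => v k q.1 q.2))
    (hvpos : ∀ k x t, 0 < v k x t) :
    ((∀ x t, pdt u x t = u x t * pdx u x t + ∑ k : Fin m, pdx (v k) x t) ∧
      (∀ (k : Fin m) (x t : ℝ), pdt (v k) x t =
        v k x t * pdx u x t + (u x t - v k x t) * pdx (v k) x t)) ↔
    (∀ x t p, p ≠ 0 → (∀ k : Fin m, p ≠ -(v k x t)) →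
      pdt u x t + ∑ k : Fin m, pdt (v k) x t / (p + v k x t) =
        (p + u x t) * (pdx u x t + ∑ k : Fin m, pdx (v k) x t / (p + v k x t)) -
          pdx u x t * p * (1 - ∑ k : Fin m, v k x t / (p * (p + v k x t)))) := by
  constructor
  · rintro ⟨h1, h2⟩ x t p hp hk
    have hw : ∀ k : Fin m, p + v k x t ≠ 0 := by
      intro k hc; exact hk k (by linarith)
    rw [form_eq m (pdt u x t) (pdx u x t) (u x t) p
      (fun k => pdt (v k) x t) (fun k => pdx (v k) x t) (fun k => v k x t) hp hw]
    have hC : pdt u x t - u x t * pdx u x t - ∑ k : Fin m, pdx (v k) x t = 0 := by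
      linarith [h1 x t]
    have hd : ∀ k ∈ (univ : Finset (Fin m)),
        (pdt (v k) x t - (u x t - v k x t) * pdx (v k) x t
          - pdx u x t * v k x t) / (p + v k x t) = 0 := by
      intro k _
      have := h2 k x t
      have hnum : pdt (v k) x t - (u x t - v k x t) * pdx (v k) x t
          - pdx u x t * v k x t = 0 := by linarith
      rw [hnum, zero_div]
    rw [hC, Finset.sum_congr rfl hd, Finset.sum_const_zero, add_zero]
  · intro h
    -- Pointwise extraction of the residues.
    have hext : ∀ x t : ℝ,
        (pdt u x t - u x t * pdx u x t - ∑ k : Fin m, pdx (v k) x t = 0) ∧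
        ∀ k0 : Fin m, ∑ k ∈ Finset.univ.filter (fun k => v k x t = v k0 x t),
          (pdt (v k) x t - (u x t - v k x t) * pdx (v k) x t - pdx u x t * v k x t) = 0 := by
      intro x t
      have hyp : ∀ p : ℝ, p ≠ 0 → (∀ k : Fin m, p ≠ -(v k x t)) →
          (pdt u x t - u x t * pdx u x t - ∑ k : Fin m, pdx (v k) x t) +
            ∑ k : Fin m, (pdt (v k) x t - (u x t - v k x t) * pdx (v k) x t
              - pdx u x t * v k x t) / (p + v k x t) = 0 := by
        intro p hp hk
        have hw : ∀ k : Fin m, p + v k x t ≠ 0 := by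
          intro k hc; exact hk k (by linarith)
        exact (form_eq m (pdt u x t) (pdx u x t) (u x t) p
          (fun k => pdt (v k) x t) (fun k => pdx (v k) x t)
          (fun k => v k x t) hp hw).mp (h x t p hp hk)
      exact extract _ _ _ (fun k => hvpos k x t) hyp
    constructor
    · intro x t
      linarith [(hext x t).1]
    -- The genuinely analytic part: separate the grouped residues using smoothness.
    set g : Fin m → ℝ × ℝ → ℝ := fun k q =>
      Pdt (v k) q - (u q.1 q.2 - v k q.1 q.2) * Pdx (v k) q
        - Pdx u q * v k q.1 q.2 with hgdef
    have hgrp : ∀ (q : ℝ × ℝ) (k0 : Fin m),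
        ∑ k ∈ Finset.univ.filter (fun k => v k q.1 q.2 = v k0 q.1 q.2), g k q = 0 := by
      intro q k0
      have := (hext q.1 q.2).2 k0
      have hco : ∀ k ∈ Finset.univ.filter (fun k => v k q.1 q.2 = v k0 q.1 q.2),
          (pdt (v k) q.1 q.2 - (u q.1 q.2 - v k q.1 q.2) * pdx (v k) q.1 q.2
            - pdx u q.1 q.2 * v k q.1 q.2) = g k q := by
        intro k _
        rw [hgdef]
        rw [pdt_eq_Pdt (v k) (hv k), pdx_eq_Pdx (v k) (hv k), pdx_eq_Pdx u hu]
      rw [Finset.sum_congr rfl hco] at this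
      exact this
    have hgcont : ∀ k, Continuous (g k) := by
      intro k
      have hcu : Continuous (fun q : ℝ × ℝ => u q.1 q.2) := hu.continuous
      have hcv : Continuous (fun q : ℝ × ℝ => v k q.1 q.2) := (hv k).continuous
      exact ((continuous_Pdt (v k) (hv k)).sub
        ((hcu.sub hcv).mul (continuous_Pdx (v k) (hv k)))).sub
        ((continuous_Pdx u hu).mul hcv)
    set S : Set (ℝ × ℝ) := {q | ∀ k, g k q = 0} with hSdef
    have hScl : IsClosed S := by
      have : S = ⋂ k, {q : ℝ × ℝ | g k q = 0} := by
        ext q; simp [hSdef, Set.mem_iInter]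
      rw [this]
      exact isClosed_iInter fun k => isClosed_eq (hgcont k) continuous_const
    have hSden : Dense S := by
      rw [dense_iff_inter_open]
      rintro O hO ⟨q, hqO⟩
      -- number of distinct pairs
      set D : ℝ × ℝ → ℕ := fun q' =>
        (Finset.univ.filter (fun ij : Fin m × Fin m =>
          v ij.1 q'.1 q'.2 ≠ v ij.2 q'.1 q'.2)).card with hDdef
      obtain ⟨q0, hq0O, hq0max⟩ : ∃ q0 ∈ O, ∀ q' ∈ O, D q' ≤ D q0 := by
        have hne : (D '' O).Nonempty := ⟨D q, q, hqO, rfl⟩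
        have hbdd : BddAbove (D '' O) := by
          refine ⟨(Finset.univ : Finset (Fin m × Fin m)).card, ?_⟩
          rintro n ⟨q', _, rfl⟩
          exact Finset.card_filter_le _ _
        obtain ⟨q0, hq0, hDq0⟩ := Nat.sSup_mem hne hbdd
        exact ⟨q0, hq0, fun q' hq' => hDq0 ▸ le_csSup hbdd ⟨q', hq', rfl⟩⟩
      -- the open set where pairs distinct at q0 stay distinct
      set V : Set (ℝ × ℝ) := O ∩ ⋂ ij ∈ (Finset.univ.filter (fun ij : Fin m × Fin m =>
          v ij.1 q0.1 q0.2 ≠ v ij.2 q0.1 q0.2)),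
        {q' : ℝ × ℝ | v ij.1 q'.1 q'.2 ≠ v ij.2 q'.1 q'.2} with hVdef
      have hVopen : IsOpen V := by
        apply hO.inter
        apply isOpen_biInter_finset
        intro ij _
        exact isOpen_ne_fun ((hv ij.1).continuous) ((hv ij.2).continuous)
      have hq0V : q0 ∈ V := by
        refine ⟨hq0O, ?_⟩
        simp only [Set.mem_iInter]
        intro ij hij
        exact (Finset.mem_filter.mp hij).2
      -- on V, pairs equal at q0 stay equal
      have hVeq : ∀ q' ∈ V, ∀ i j : Fin m,
          v i q0.1 q0.2 = v j q0.1 q0.2 → v i q'.1 q'.2 = v j q'.1 q'.2 := by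
        intro q' hq' i j hij
        by_contra hne
        have hsub : Finset.univ.filter (fun ij : Fin m × Fin m =>
            v ij.1 q0.1 q0.2 ≠ v ij.2 q0.1 q0.2) ⊆
            Finset.univ.filter (fun ij : Fin m × Fin m =>
            v ij.1 q'.1 q'.2 ≠ v ij.2 q'.1 q'.2) := by
          intro ij hijm
          have hd := (Finset.mem_filter.mp hijm).2
          refine Finset.mem_filter.mpr ⟨Finset.mem_univ _, ?_⟩
          have := hq'.2
          simp only [Set.mem_iInter] at this
          exact this ij (Finset.mem_filter.mpr ⟨Finset.mem_univ _, hd⟩)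
        have hmem' : (i, j) ∈ Finset.univ.filter (fun ij : Fin m × Fin m =>
            v ij.1 q'.1 q'.2 ≠ v ij.2 q'.1 q'.2) :=
          Finset.mem_filter.mpr ⟨Finset.mem_univ _, hne⟩
        have hnotmem : (i, j) ∉ Finset.univ.filter (fun ij : Fin m × Fin m =>
            v ij.1 q0.1 q0.2 ≠ v ij.2 q0.1 q0.2) := by
          simp [hij]
        have hss := Finset.ssubset_iff_of_subset hsub |>.mpr ⟨(i, j), hmem', hnotmem⟩
        have hlt : D q0 < D q' := Finset.card_lt_card hss
        exact absurd (hq0max q' hq'.1) (not_le.mpr hlt)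
      -- q0 belongs to S
      refine ⟨q0, hq0O, ?_⟩
      intro k
      -- all members of the fiber of k have equal g-value at q0
      have hVnhds : V ∈ 𝓝 q0 := hVopen.mem_nhds hq0V
      have hgeq : ∀ k' ∈ Finset.univ.filter (fun k' => v k' q0.1 q0.2 = v k q0.1 q0.2),
          g k' q0 = g k q0 := by
        intro k' hk'
        have hvv : v k' q0.1 q0.2 = v k q0.1 q0.2 := (Finset.mem_filter.mp hk').2
        have hev : (fun q : ℝ × ℝ => v k' q.1 q.2) =ᶠ[𝓝 q0] fun q => v k q.1 q.2 := by
          filter_upwards [hVnhds] with q' hq'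
          exact hVeq q' hq' k' k hvv
        have hPdx : Pdx (v k') q0 = Pdx (v k) q0 := by
          unfold Pdx; rw [hev.fderiv_eq]
        have hPdt : Pdt (v k') q0 = Pdt (v k) q0 := by
          unfold Pdt; rw [hev.fderiv_eq]
        rw [hgdef]
        simp only [hPdx, hPdt, hvv]
      have hsum := hgrp q0 k
      rw [Finset.sum_congr rfl hgeq, Finset.sum_const] at hsum
      have hkmem : k ∈ Finset.univ.filter (fun k' => v k' q0.1 q0.2 = v k q0.1 q0.2) :=
        Finset.mem_filter.mpr ⟨Finset.mem_univ _, rfl⟩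
      have hcard : 0 < (Finset.univ.filter
          (fun k' => v k' q0.1 q0.2 = v k q0.1 q0.2)).card :=
        Finset.card_pos.mpr ⟨k, hkmem⟩
      have := hsum
      rw [nsmul_eq_mul] at this
      have hcard' : ((Finset.univ.filter
          (fun k' => v k' q0.1 q0.2 = v k q0.1 q0.2)).card : ℝ) ≠ 0 :=
        ne_of_gt (by exact_mod_cast hcard)
      exact (mul_eq_zero.mp this).resolve_left hcard'
    have hSuniv : S = Set.univ := by rw [← hScl.closure_eq, hSden.closure_eq]
    intro k x t
    have hk : g k (x, t) = 0 := by
      have : ((x, t) : ℝ × ℝ) ∈ S := hSuniv ▸ Set.mem_univ _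
      exact this k
    rw [hgdef] at hk
    simp only at hk
    rw [← pdt_eq_Pdt (v k) (hv k), ← pdx_eq_Pdx (v k) (hv k), ← pdx_eq_Pdx u hu] at hk
    linarith
end

section
/- Let m ≥ 1 be an integer and let c¹, …, c^{m+1} : ℝ² → ℝ be smooth functions of (x,t) such that c^i(x,t) ≠ c^j(x,t) for all i ≠ j and all (x,t). Then c¹, …, c^{m+1} satisfy the system (Wc) if and only if for every (x,t) and every real μ ∉ {c¹(x,t), …, c^{m+1}(x,t)} the following identity holds: m·c¹_t/(μ−c¹) − Σ_{j=2}^{m+1} c^j_t/(μ−c^j) = μ·(m·c¹_x/(μ−c¹) − Σ_{j=2}^{m+1} c^j_x/(μ−c^j)) − (m·c¹_x − c²_x − ⋯ − c^{m+1}_x)·(1 − m/(μ−c¹) + Σ_{j=2}^{m+1} 1/(μ−c^j)). -/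
open Filter Topology

/-- Residue extraction: a vanishing sum of simple fractions with distinct poles
has all coefficients zero. -/
lemma residue_aux {n : ℕ} (d e : Fin n → ℝ) (he : Function.Injective e)
    (h : ∀ μ : ℝ, (∀ j, μ ≠ e j) → ∑ j, d j / (μ - e j) = 0) (k : Fin n) : d k = 0 := by
  set g : ℝ → ℝ := fun μ => ∑ j, d j * ((μ - e k) / (μ - e j)) with hg
  set g' : ℝ → ℝ := fun μ => d k + ∑ j ∈ Finset.univ.erase k, d j * ((μ - e k) / (μ - e j))
    with hg'
  have hev : ∀ᶠ μ in 𝓝[≠] (e k), ∀ j, μ ≠ e j := by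
    rw [eventually_all]
    intro j
    rcases eq_or_ne j k with rfl | hjk
    · exact eventually_mem_nhdsWithin
    · have : e k ≠ e j := fun hh => hjk (he hh).symm
      exact eventually_nhdsWithin_of_eventually_nhds (eventually_ne_nhds this)
  have hg0 : ∀ᶠ μ in 𝓝[≠] (e k), g μ = 0 := by
    filter_upwards [hev] with μ hμ
    have : g μ = (μ - e k) * ∑ j, d j / (μ - e j) := by
      rw [Finset.mul_sum, hg]
      exact Finset.sum_congr rfl fun j _ => by ring
    rw [this, h μ hμ, mul_zero]
  have hgg' : ∀ᶠ μ in 𝓝[≠] (e k), g μ = g' μ := by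
    filter_upwards [eventually_mem_nhdsWithin] with μ hμ
    have hμk : μ - e k ≠ 0 := sub_ne_zero.2 hμ
    simp only [hg, hg']
    rw [← Finset.add_sum_erase _ (fun j => d j * ((μ - e k) / (μ - e j))) (Finset.mem_univ k)]
    congr 1
    rw [div_self hμk, mul_one]
  have hcont : Tendsto g' (𝓝 (e k))
      (𝓝 (d k + ∑ j ∈ Finset.univ.erase k, d j * ((e k - e k) / (e k - e j)))) := by
    apply Tendsto.add tendsto_const_nhds
    apply tendsto_finset_sum
    intro j hj
    have hjk : e k - e j ≠ 0 := sub_ne_zero.2 fun hh => (Finset.mem_erase.1 hj).1 (he hh.symm)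
    exact tendsto_const_nhds.mul ((tendsto_id.sub tendsto_const_nhds).div
      (tendsto_id.sub tendsto_const_nhds) hjk)
  have hval : (d k + ∑ j ∈ Finset.univ.erase k, d j * ((e k - e k) / (e k - e j))) = d k := by
    simp
  rw [hval] at hcont
  have hlim : Tendsto g (𝓝[≠] (e k)) (𝓝 (d k)) :=
    (hcont.mono_left nhdsWithin_le_nhds).congr' (hgg'.mono fun μ h => h.symm)
  have hlim0 : Tendsto g (𝓝[≠] (e k)) (𝓝 0) :=
    Tendsto.congr' (hg0.mono fun μ h => h.symm) tendsto_const_nhds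
  exact tendsto_nhds_unique hlim hlim0

/-- The algebraic reshaping of the Lax identity as a sum of simple fractions. -/
lemma alg_aux {n : ℕ} (μ : ℝ) (ε a b c : Fin n → ℝ) (h : ∀ j, μ ≠ c j) :
    ((∑ j, ε j * a j / (μ - c j)) =
      μ * (∑ j, ε j * b j / (μ - c j)) -
        (∑ j, ε j * b j) * (1 + ∑ j, (-ε j) / (μ - c j))) ↔
    (∑ j, ε j * (a j - (c j * b j + ∑ i, ε i * b i)) / (μ - c j)) = 0 := by
  have hD : ∀ j, μ - c j ≠ 0 := fun j => sub_ne_zero.2 (h j)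
  set S : ℝ := ∑ i, ε i * b i with hS
  have h1 : μ * (∑ j, ε j * b j / (μ - c j)) =
      S + ∑ j, ε j * (c j * b j) / (μ - c j) := by
    rw [Finset.mul_sum, hS, ← Finset.sum_add_distrib]
    refine Finset.sum_congr rfl fun j _ => ?_
    have hj := hD j
    field_simp
    ring
  have h2 : S * (1 + ∑ j, (-ε j) / (μ - c j)) = S - ∑ j, ε j * S / (μ - c j) := by
    have hx : ∑ j, ε j * S / (μ - c j) = -∑ j, S * (-ε j / (μ - c j)) := by
      rw [← Finset.sum_neg_distrib]
      exact Finset.sum_congr rfl fun j _ => by ring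
    rw [mul_add, mul_one, Finset.mul_sum, hx]
    ring
  have h3 : (∑ j, ε j * (a j - (c j * b j + S)) / (μ - c j)) =
      (∑ j, ε j * a j / (μ - c j)) -
        ((∑ j, ε j * (c j * b j) / (μ - c j)) + ∑ j, ε j * S / (μ - c j)) := by
    rw [← Finset.sum_add_distrib, ← Finset.sum_sub_distrib]
    refine Finset.sum_congr rfl fun j _ => ?_
    ring
  rw [h1, h2, h3]
  constructor <;> intro H <;> linarith

/-- Sign weights: `m` on the distinguished index `0`, `-1` on the others. -/
noncomputable def eps (m : ℕ) : Fin (m + 1) → ℝ := Fin.cons (m : ℝ) (fun _ => -1)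

@[simp] lemma eps_zero (m : ℕ) : eps m 0 = m := rfl
@[simp] lemma eps_succ (m : ℕ) (l : Fin m) : eps m l.succ = -1 := rfl

/-- with `c 0 = c¹` and `c l.succ = c^{l+1}` for `l : Fin m`,
the system (Wc) holds iff the dispersionless Lax identity `Λ_t = {B, Λ}`
holds for every real `μ ∉ {c¹, …, c^{m+1}}`. -/
theorem statement1 (m : ℕ) (hm : 1 ≤ m)
    (c : Fin (m + 1) → ℝ → ℝ → ℝ)
    (hc : ∀ j, ContDiff ℝ (⊤ : ℕ∞) (fun q : ℝ × ℝ => c j q.1 q.2))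
    (hne : ∀ i j, i ≠ j → ∀ x t, c i x t ≠ c j x t) :
    (∀ (j : Fin (m + 1)) (x t : ℝ), pdt (c j) x t =
        c j x t * pdx (c j) x t + m * pdx (c 0) x t -
          ∑ l : Fin m, pdx (c l.succ) x t) ↔
    (∀ x t μ, (∀ j, μ ≠ c j x t) →
      m * pdt (c 0) x t / (μ - c 0 x t) -
          ∑ l : Fin m, pdt (c l.succ) x t / (μ - c l.succ x t) =
        μ * (m * pdx (c 0) x t / (μ - c 0 x t) -
            ∑ l : Fin m, pdx (c l.succ) x t / (μ - c l.succ x t)) -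
          (m * pdx (c 0) x t - ∑ l : Fin m, pdx (c l.succ) x t) *
            (1 - m / (μ - c 0 x t) + ∑ l : Fin m, 1 / (μ - c l.succ x t))) := by
  have hSsum : ∀ x t : ℝ, ∑ i, eps m i * pdx (c i) x t =
      ↑m * pdx (c 0) x t - ∑ l : Fin m, pdx (c l.succ) x t := by
    intro x t
    rw [Fin.sum_univ_succ, eps_zero, sub_eq_add_neg, ← Finset.sum_neg_distrib]
    congr 1
    exact Finset.sum_congr rfl fun l _ => by rw [eps_succ]; ring
  have main : ∀ x t μ : ℝ, (∀ j, μ ≠ c j x t) →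
      ((↑m * pdt (c 0) x t / (μ - c 0 x t) -
          ∑ l : Fin m, pdt (c l.succ) x t / (μ - c l.succ x t) =
        μ * (↑m * pdx (c 0) x t / (μ - c 0 x t) -
            ∑ l : Fin m, pdx (c l.succ) x t / (μ - c l.succ x t)) -
          (↑m * pdx (c 0) x t - ∑ l : Fin m, pdx (c l.succ) x t) *
            (1 - ↑m / (μ - c 0 x t) + ∑ l : Fin m, 1 / (μ - c l.succ x t))) ↔
      (∑ j, eps m j * (pdt (c j) x t -
          (c j x t * pdx (c j) x t + ∑ i, eps m i * pdx (c i) x t)) / (μ - c j x t)) = 0) := by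
    intro x t μ hμ
    have br1 : ↑m * pdt (c 0) x t / (μ - c 0 x t) -
        ∑ l : Fin m, pdt (c l.succ) x t / (μ - c l.succ x t) =
        ∑ j, eps m j * pdt (c j) x t / (μ - c j x t) := by
      rw [Fin.sum_univ_succ, eps_zero, sub_eq_add_neg, ← Finset.sum_neg_distrib]
      congr 1
      exact Finset.sum_congr rfl fun l _ => by rw [eps_succ]; ring
    have br2 : ↑m * pdx (c 0) x t / (μ - c 0 x t) -
        ∑ l : Fin m, pdx (c l.succ) x t / (μ - c l.succ x t) =
        ∑ j, eps m j * pdx (c j) x t / (μ - c j x t) := by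
      rw [Fin.sum_univ_succ, eps_zero, sub_eq_add_neg, ← Finset.sum_neg_distrib]
      congr 1
      exact Finset.sum_congr rfl fun l _ => by rw [eps_succ]; ring
    have br4 : 1 - ↑m / (μ - c 0 x t) + ∑ l : Fin m, 1 / (μ - c l.succ x t) =
        1 + ∑ j, (-eps m j) / (μ - c j x t) := by
      rw [Fin.sum_univ_succ, eps_zero]
      have hx : ∀ l : Fin m, 1 / (μ - c l.succ x t) = (-eps m l.succ) / (μ - c l.succ x t) :=
        fun l => by rw [eps_succ]; ring
      rw [Finset.sum_congr rfl fun l _ => hx l]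
      ring
    rw [br1, br2, br4, ← hSsum x t]
    exact alg_aux μ (eps m) (fun j => pdt (c j) x t) (fun j => pdx (c j) x t)
      (fun j => c j x t) hμ
  constructor
  · intro hsys x t μ hμ
    refine (main x t μ hμ).2 ?_
    apply Finset.sum_eq_zero
    intro j _
    have hz : pdt (c j) x t -
        (c j x t * pdx (c j) x t + ∑ i, eps m i * pdx (c i) x t) = 0 := by
      rw [hsys j x t, hSsum x t]
      ring
    rw [hz]
    simp
  · intro hlax j x t
    have he : Function.Injective (fun i => c i x t) := by
      intro i j hij
      by_contra hne'
      exact hne i j hne' x t hij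
    have hres := residue_aux
      (fun i => eps m i * (pdt (c i) x t -
        (c i x t * pdx (c i) x t + ∑ i', eps m i' * pdx (c i') x t)))
      (fun i => c i x t) he
      (fun μ hμ => (main x t μ hμ).1 (hlax x t μ hμ)) j
    have hεne : eps m j ≠ 0 := by
      induction j using Fin.cases with
      | zero => simp only [eps_zero]; exact Nat.cast_ne_zero.2 (by omega)
      | succ l => simp only [eps_succ]; norm_num
    have hW : pdt (c j) x t -
        (c j x t * pdx (c j) x t + ∑ i, eps m i * pdx (c i) x t) = 0 := by
      rcases mul_eq_zero.1 hres with h | h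
      · exact absurd h hεne
      · exact h
    have hS := hSsum x t
    rw [hS] at hW
    linarith
end

section
/- Let m ≥ 1 be an integer and let c¹, …, c^{m+1} : ℝ² → ℝ be smooth functions of (x,t). Define u = c¹ and v^{j−1} = c¹ − c^j for j = 2, …, m+1. Then c¹, …, c^{m+1} satisfy the system (Wc) if and only if the functions u, v¹, …, vᵐ satisfy the system (W). -/
lemma diffx_of_contDiff {f : ℝ → ℝ → ℝ}
    (hf : ContDiff ℝ (⊤ : ℕ∞) (fun q : ℝ × ℝ => f q.1 q.2)) (x t : ℝ) :
    DifferentiableAt ℝ (fun y => f y t) x := by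
  have : (fun y => f y t) = (fun q : ℝ × ℝ => f q.1 q.2) ∘ (fun y => (y, t)) := rfl
  rw [this]
  exact (hf.differentiable (by simp)).differentiableAt.comp x
    ((differentiableAt_id.prodMk (differentiableAt_const t)))

lemma difft_of_contDiff {f : ℝ → ℝ → ℝ}
    (hf : ContDiff ℝ (⊤ : ℕ∞) (fun q : ℝ × ℝ => f q.1 q.2)) (x t : ℝ) :
    DifferentiableAt ℝ (fun s => f x s) t := by
  have : (fun s => f x s) = (fun q : ℝ × ℝ => f q.1 q.2) ∘ (fun s => (x, s)) := rfl
  rw [this]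
  exact (hf.differentiable (by simp)).differentiableAt.comp t
    (((differentiableAt_const x).prodMk differentiableAt_id))

/-- under the change of variables `u = c¹`, `v^{j-1} = c¹ - c^j`,
the system (Wc) is equivalent to the system (W). -/
theorem statement2 (m : ℕ) (hm : 1 ≤ m)
    (c : Fin (m + 1) → ℝ → ℝ → ℝ)
    (hc : ∀ j, ContDiff ℝ (⊤ : ℕ∞) (fun q : ℝ × ℝ => c j q.1 q.2))
    (u : ℝ → ℝ → ℝ) (v : Fin m → ℝ → ℝ → ℝ)
    (hu : u = c 0)
    (hv : ∀ k : Fin m, v k = fun x t => c 0 x t - c k.succ x t) :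
    (∀ (j : Fin (m + 1)) (x t : ℝ), pdt (c j) x t =
        c j x t * pdx (c j) x t + m * pdx (c 0) x t -
          ∑ l : Fin m, pdx (c l.succ) x t) ↔
    ((∀ x t, pdt u x t = u x t * pdx u x t + ∑ k : Fin m, pdx (v k) x t) ∧
      (∀ (k : Fin m) (x t : ℝ), pdt (v k) x t =
        v k x t * pdx u x t + (u x t - v k x t) * pdx (v k) x t)) := by
  have hvdx : ∀ (k : Fin m) (x t : ℝ),
      pdx (v k) x t = pdx (c 0) x t - pdx (c k.succ) x t := by
    intro k x t
    rw [hv k]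
    exact deriv_sub (diffx_of_contDiff (hc 0) x t) (diffx_of_contDiff (hc k.succ) x t)
  have hvdt : ∀ (k : Fin m) (x t : ℝ),
      pdt (v k) x t = pdt (c 0) x t - pdt (c k.succ) x t := by
    intro k x t
    rw [hv k]
    exact deriv_sub (difft_of_contDiff (hc 0) x t) (difft_of_contDiff (hc k.succ) x t)
  have hS : ∀ x t : ℝ, ∑ k : Fin m, pdx (v k) x t =
      m * pdx (c 0) x t - ∑ l : Fin m, pdx (c l.succ) x t := by
    intro x t
    simp only [hvdx]
    rw [Finset.sum_sub_distrib, Finset.sum_const, Finset.card_univ, Fintype.card_fin,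
      nsmul_eq_mul]
  constructor
  · intro H
    constructor
    · intro x t
      rw [hu, hS]
      linear_combination H 0 x t
    · intro k x t
      rw [hvdt, hvdx, hu, hv k]
      linear_combination H 0 x t - H k.succ x t
  · rintro ⟨H1, H2⟩ j
    induction j using Fin.cases with
    | zero =>
      intro x t
      have := H1 x t
      rw [hu, hS] at this
      linear_combination this
    | succ k =>
      intro x t
      have h1 := H1 x t
      have h2 := H2 k x t
      rw [hu, hS] at h1
      rw [hvdt, hvdx, hu, hv k] at h2
      simp only at h2
      linear_combination h1 - h2
end

section
/- Let m ≥ 1, n ≥ 2 be integers, let u, v¹, …, vᵐ : ℝ² → ℝ be smooth with v^k(x,t) > 0 for all (x,t), let (a_i)_{i≤n} be a Laurent family for Lⁿ, and suppose the Lax flow at level n holds. Then for every k = 1, …, m and every (x,t): ∂_x( Σ_{i=1}^n (−1)^{i−1}·a_i·(v^k)^i ) = v^k_t, i.e. the function Σ_{i=1}^n (−1)^{i−1}·a_i·(v^k)^i is an x-antiderivative of v^k_t. -/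
open Finset

open Finset Filter Topology Polynomial

section auxiliary
variable {f : ℝ → ℝ → ℝ} {m : ℕ}

variable {f : ℝ → ℝ → ℝ}

lemma differentiableAt_slice_x (hf : ContDiff ℝ (⊤ : ℕ∞) (fun q : ℝ × ℝ => f q.1 q.2)) (x t : ℝ) :
    DifferentiableAt ℝ (fun y => f y t) x := by
  have h := (hf.differentiable (by simp)) (x, t)
  exact h.comp x (differentiableAt_fun_id.prodMk (differentiableAt_const t) :
    DifferentiableAt ℝ (fun y : ℝ => ((y, t) : ℝ × ℝ)) x)

lemma differentiableAt_slice_t (hf : ContDiff ℝ (⊤ : ℕ∞) (fun q : ℝ × ℝ => f q.1 q.2)) (x t : ℝ) :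
    DifferentiableAt ℝ (fun s => f x s) t := by
  have h := (hf.differentiable (by simp)) (x, t)
  exact h.comp t ((differentiableAt_const x).prodMk differentiableAt_fun_id)

lemma hasDerivAt_pdx (hf : ContDiff ℝ (⊤ : ℕ∞) (fun q : ℝ × ℝ => f q.1 q.2)) (x t : ℝ) :
    HasDerivAt (fun y => f y t) (pdx f x t) x :=
  (differentiableAt_slice_x hf x t).hasDerivAt

lemma pdx_eq_fderiv (hf : ContDiff ℝ (⊤ : ℕ∞) (fun q : ℝ × ℝ => f q.1 q.2)) (x t : ℝ) :
    pdx f x t = fderiv ℝ (fun q : ℝ × ℝ => f q.1 q.2) (x, t) (1, 0) := by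
  have h1 : HasFDerivAt (fun q : ℝ × ℝ => f q.1 q.2)
      (fderiv ℝ (fun q : ℝ × ℝ => f q.1 q.2) (x, t)) (x, t) :=
    ((hf.differentiable (by simp)) (x, t)).hasFDerivAt
  have h2 : HasDerivAt (fun y : ℝ => ((y, t) : ℝ × ℝ)) ((1 : ℝ), (0 : ℝ)) x :=
    (hasDerivAt_id x).prodMk (hasDerivAt_const x t)
  exact (h1.comp_hasDerivAt x h2).deriv.symm ▸ rfl

lemma pdt_eq_fderiv (hf : ContDiff ℝ (⊤ : ℕ∞) (fun q : ℝ × ℝ => f q.1 q.2)) (x t : ℝ) :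
    pdt f x t = fderiv ℝ (fun q : ℝ × ℝ => f q.1 q.2) (x, t) (0, 1) := by
  have h1 : HasFDerivAt (fun q : ℝ × ℝ => f q.1 q.2)
      (fderiv ℝ (fun q : ℝ × ℝ => f q.1 q.2) (x, t)) (x, t) :=
    ((hf.differentiable (by simp)) (x, t)).hasFDerivAt
  have h2 : HasDerivAt (fun s : ℝ => ((x, s) : ℝ × ℝ)) ((0 : ℝ), (1 : ℝ)) t :=
    (hasDerivAt_const t x).prodMk (hasDerivAt_id t)
  exact (h1.comp_hasDerivAt t h2).deriv.symm ▸ rfl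

lemma continuous_pdx (hf : ContDiff ℝ (⊤ : ℕ∞) (fun q : ℝ × ℝ => f q.1 q.2)) :
    Continuous (fun q : ℝ × ℝ => pdx f q.1 q.2) := by
  have : (fun q : ℝ × ℝ => pdx f q.1 q.2)
      = fun q : ℝ × ℝ => fderiv ℝ (fun q : ℝ × ℝ => f q.1 q.2) q (1, 0) := by
    funext q; exact pdx_eq_fderiv hf q.1 q.2
  rw [this]
  exact (hf.continuous_fderiv (by simp)).clm_apply continuous_const

lemma continuous_pdt (hf : ContDiff ℝ (⊤ : ℕ∞) (fun q : ℝ × ℝ => f q.1 q.2)) :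
    Continuous (fun q : ℝ × ℝ => pdt f q.1 q.2) := by
  have : (fun q : ℝ × ℝ => pdt f q.1 q.2)
      = fun q : ℝ × ℝ => fderiv ℝ (fun q : ℝ × ℝ => f q.1 q.2) q (0, 1) := by
    funext q; exact pdt_eq_fderiv hf q.1 q.2
  rw [this]
  exact (hf.continuous_fderiv (by simp)).clm_apply continuous_const


variable {m : ℕ}

/-- Clearing-denominator eval identity. -/
lemma eval_clear (W : Fin m → ℝ) (c : ℝ) (d : Fin m → ℝ) (p : ℝ)
    (hWp : ∀ j, p + W j ≠ 0) :
    (Polynomial.C c * (X * ∏ j, (X + Polynomial.C (W j)))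
      + ∑ j, Polynomial.C (d j) * (X * ∏ l ∈ univ.erase j, (X + Polynomial.C (W l)))).eval p
    = (c + ∑ j, d j / (p + W j)) * (p * ∏ j, (p + W j)) := by
  simp only [eval_add, eval_mul, eval_C, eval_X, eval_finset_sum, eval_prod]
  rw [add_mul, Finset.sum_mul]
  congr 1
  refine Finset.sum_congr rfl fun j _ => ?_
  rw [← Finset.mul_prod_erase univ (fun l => p + W l) (Finset.mem_univ j)]
  rw [div_mul_eq_mul_div, eq_div_iff (hWp j)]
  ring

/-- The second clearing identity, for `1 - ∑ W j / (p (p + W j))`. -/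
lemma eval_clear2 (W : Fin m → ℝ) (p : ℝ) (hp : p ≠ 0) (hWp : ∀ j, p + W j ≠ 0) :
    ((X * ∏ j, (X + Polynomial.C (W j)))
      - ∑ j, Polynomial.C (W j) * ∏ l ∈ univ.erase j, (X + Polynomial.C (W l))).eval p
    = (1 - ∑ j, W j / (p * (p + W j))) * (p * ∏ j, (p + W j)) := by
  simp [eval_finset_sum, eval_prod]
  rw [sub_mul, one_mul, Finset.sum_mul]
  congr 1
  refine Finset.sum_congr rfl fun j _ => ?_
  rw [← Finset.mul_prod_erase univ (fun l => p + W l) (Finset.mem_univ j)]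
  rw [div_mul_eq_mul_div, eq_div_iff (mul_ne_zero hp (hWp j))]
  ring

/-- Extension of the Lax-flow rational identity from large `p` to all non-pole `p`. -/
lemma core_ext (n : ℕ) (Ut Ux : ℝ) (Vt Vx W : Fin m → ℝ) (α β : ℕ → ℝ)
    (hW : ∀ j, 0 < W j)
    (H : ∀ p : ℝ, (∀ j, 1 + W j < p) →
      Ut + ∑ j, Vt j / (p + W j) =
        (∑ i ∈ Icc 1 n, (i : ℝ) * α i * p ^ (i - 1)) * (Ux + ∑ j, Vx j / (p + W j)) -
          (∑ i ∈ Icc 1 n, β i * p ^ i) * (1 - ∑ j, W j / (p * (p + W j)))) :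
    ∀ p : ℝ, p ≠ 0 → (∀ j, p + W j ≠ 0) →
      Ut + ∑ j, Vt j / (p + W j) =
        (∑ i ∈ Icc 1 n, (i : ℝ) * α i * p ^ (i - 1)) * (Ux + ∑ j, Vx j / (p + W j)) -
          (∑ i ∈ Icc 1 n, β i * p ^ i) * (1 - ∑ j, W j / (p * (p + W j))) := by
  set Pfull : ℝ[X] := X * ∏ j, (X + Polynomial.C (W j)) with hPfull
  set Q1 : ℝ[X] := Polynomial.C Ut * Pfull
    + ∑ j, Polynomial.C (Vt j) * (X * ∏ l ∈ univ.erase j, (X + Polynomial.C (W l))) with hQ1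
  set Apoly : ℝ[X] := ∑ i ∈ Icc 1 n, Polynomial.C ((i : ℝ) * α i) * X ^ (i - 1) with hA
  set Bpoly : ℝ[X] := ∑ i ∈ Icc 1 n, Polynomial.C (β i) * X ^ i with hB
  set Q2 : ℝ[X] := Apoly * (Polynomial.C Ux * Pfull
      + ∑ j, Polynomial.C (Vx j) * (X * ∏ l ∈ univ.erase j, (X + Polynomial.C (W l))))
    - Bpoly * (Pfull - ∑ j, Polynomial.C (W j) * ∏ l ∈ univ.erase j, (X + Polynomial.C (W l)))
    with hQ2
  have evalA : ∀ p : ℝ, Apoly.eval p = ∑ i ∈ Icc 1 n, (i : ℝ) * α i * p ^ (i - 1) := by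
    intro p; simp [hA, eval_finset_sum]
  have evalB : ∀ p : ℝ, Bpoly.eval p = ∑ i ∈ Icc 1 n, β i * p ^ i := by
    intro p; simp [hB, eval_finset_sum]
  have evalP : ∀ p : ℝ, Pfull.eval p = p * ∏ j, (p + W j) := by
    intro p; simp [hPfull, eval_prod]
  have key : ∀ p : ℝ, p ≠ 0 → (∀ j, p + W j ≠ 0) →
      (Q1.eval p = (Ut + ∑ j, Vt j / (p + W j)) * (p * ∏ j, (p + W j))
        ∧ Q2.eval p =
          ((∑ i ∈ Icc 1 n, (i : ℝ) * α i * p ^ (i - 1)) * (Ux + ∑ j, Vx j / (p + W j)) -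
            (∑ i ∈ Icc 1 n, β i * p ^ i) * (1 - ∑ j, W j / (p * (p + W j))))
            * (p * ∏ j, (p + W j))) := by
    intro p hp hWp
    constructor
    · exact eval_clear W Ut Vt p hWp
    · rw [hQ2, eval_sub, eval_mul, eval_mul, eval_clear W Ux Vx p hWp,
        eval_clear2 W p hp hWp, evalA, evalB]
      ring
  have hPne : ∀ p : ℝ, p ≠ 0 → (∀ j, p + W j ≠ 0) → (p * ∏ j, (p + W j)) ≠ 0 := by
    intro p hp hWp
    exact mul_ne_zero hp (Finset.prod_ne_zero_iff.2 fun j _ => hWp j)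
  have hQeq : Q1 = Q2 := by
    apply Polynomial.eq_of_infinite_eval_eq
    apply Set.Infinite.mono (s := Set.Ioi (1 + ∑ j, W j))
    · intro p hp
      have hlt : ∀ j, 1 + W j < p := by
        intro j
        refine lt_of_le_of_lt ?_ hp
        have : W j ≤ ∑ j, W j :=
          Finset.single_le_sum (fun l _ => (hW l).le) (Finset.mem_univ j)
        linarith
      have hsum : (0:ℝ) ≤ ∑ j, W j := Finset.sum_nonneg fun j _ => (hW j).le
      have hp' : 1 + ∑ j, W j < p := hp
      have hp0 : p ≠ 0 := by intro h; rw [h] at hp'; linarith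
      have hWp : ∀ j, p + W j ≠ 0 := fun j => by have := hW j; have := hlt j; intro h; linarith
      have k := key p hp0 hWp
      show Q1.eval p = Q2.eval p
      rw [k.1, k.2, H p hlt]
    · exact Set.Ioi_infinite _
  intro p hp hWp
  have h1 := (key p hp hWp).1
  have h2 := (key p hp hWp).2
  have := hQeq ▸ h1
  rw [h2] at this
  exact (mul_right_cancel₀ (hPne p hp hWp) this).symm


lemma core_residue (n : ℕ) (Ut Ux : ℝ) (Vt Vx W : Fin m → ℝ) (α β : ℕ → ℝ)
    (hW : ∀ j, 0 < W j) (k : Fin m)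
    (H : ∀ p : ℝ, p ≠ 0 → (∀ j, p + W j ≠ 0) →
      Ut + ∑ j, Vt j / (p + W j) =
        (∑ i ∈ Icc 1 n, (i : ℝ) * α i * p ^ (i - 1)) * (Ux + ∑ j, Vx j / (p + W j)) -
          (∑ i ∈ Icc 1 n, β i * p ^ i) * (1 - ∑ j, W j / (p * (p + W j)))) :
    ∑ j ∈ univ.filter (fun j => W j = W k), Vt j =
      (∑ i ∈ Icc 1 n, (i : ℝ) * α i * (-W k) ^ (i - 1)) *
          (∑ j ∈ univ.filter (fun j => W j = W k), Vx j) -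
        ((univ.filter (fun j => W j = W k)).card : ℝ) *
          (∑ i ∈ Icc 1 n, β i * (-W k) ^ i) := by
  classical
  set w := W k with hw
  set S : Finset (Fin m) := univ.filter (fun j => W j = w) with hS
  set s : Set ℝ := {p | p ≠ 0 ∧ ∀ j, p + W j ≠ 0} with hs
  -- the point -w is in the closure of s
  have hwne : w ≠ 0 := (hW k).ne'
  have hdense : Dense s := by
    have hsub : ({(0:ℝ)} ∪ Set.range (fun j => -W j))ᶜ ⊆ s := by
      intro p hp
      simp only [Set.mem_compl_iff, Set.mem_union, Set.mem_singleton_iff, Set.mem_range,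
        not_or, not_exists] at hp
      refine ⟨hp.1, fun j => ?_⟩
      have := hp.2 j
      intro h; apply this; linarith
    have : Dense (({(0:ℝ)} ∪ Set.range (fun j => -W j))ᶜ) :=
      Set.Countable.dense_compl ℝ
        ((Set.countable_singleton _).union (Set.countable_range _))
    exact this.mono hsub
  have hne : (𝓝[s] (-w)).NeBot :=
    mem_closure_iff_nhdsWithin_neBot.1 (hdense (-w))
  -- the two auxiliary functions
  set A : ℝ → ℝ := fun p => ∑ i ∈ Icc 1 n, (i : ℝ) * α i * p ^ (i - 1) with hA
  set B : ℝ → ℝ := fun p => ∑ i ∈ Icc 1 n, β i * p ^ i with hB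
  set f : ℝ → ℝ := fun p => ∑ j ∈ S, Vt j +
    ((p + w) * Ut + ∑ j ∈ univ.filter (fun j => ¬ W j = w), Vt j * ((p + w) / (p + W j)))
    with hf
  set g : ℝ → ℝ := fun p => A p *
      ((p + w) * Ux + ∑ j ∈ S, Vx j +
        ∑ j ∈ univ.filter (fun j => ¬ W j = w), Vx j * ((p + w) / (p + W j))) -
    B p * ((p + w) - ∑ j ∈ S, W j / p -
        ∑ j ∈ univ.filter (fun j => ¬ W j = w), W j * ((p + w) / (p * (p + W j)))) with hg
  -- f = g on s
  have hfg : ∀ p ∈ s, f p = g p := by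
    intro p hp
    obtain ⟨hp0, hWp⟩ := hp
    have hpw : p + w ≠ 0 := hWp k
    have hlhs : f p = (p + w) * (Ut + ∑ j, Vt j / (p + W j)) := by
      rw [hf]
      simp only [mul_add]
      rw [Finset.mul_sum]
      rw [← Finset.sum_filter_add_sum_filter_not univ (fun j => W j = w)
        (fun j => (p + w) * (Vt j / (p + W j)))]
      have h1 : ∑ j ∈ S, (p + w) * (Vt j / (p + W j)) = ∑ j ∈ S, Vt j := by
        refine Finset.sum_congr rfl fun j hj => ?_
        have hjw : W j = w := by simpa [hS] using hj
        rw [hjw, mul_div_assoc']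
        field_simp
      have h2 : ∀ j ∈ univ.filter (fun j => ¬ W j = w),
          (p + w) * (Vt j / (p + W j)) = Vt j * ((p + w) / (p + W j)) := by
        intro j _; ring
      rw [h1, Finset.sum_congr rfl h2]
      ring
    have hrhs : g p = (p + w) * ((A p) * (Ux + ∑ j, Vx j / (p + W j)) -
        (B p) * (1 - ∑ j, W j / (p * (p + W j)))) := by
      rw [hg]
      have e1 : (p + w) * (Ux + ∑ j, Vx j / (p + W j)) =
          (p + w) * Ux + ∑ j ∈ S, Vx j +
            ∑ j ∈ univ.filter (fun j => ¬ W j = w), Vx j * ((p + w) / (p + W j)) := by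
        rw [mul_add, Finset.mul_sum,
          ← Finset.sum_filter_add_sum_filter_not univ (fun j => W j = w)
            (fun j => (p + w) * (Vx j / (p + W j)))]
        have h1 : ∑ j ∈ S, (p + w) * (Vx j / (p + W j)) = ∑ j ∈ S, Vx j := by
          refine Finset.sum_congr rfl fun j hj => ?_
          have hjw : W j = w := by simpa [hS] using hj
          rw [hjw, mul_div_assoc']
          field_simp
        have h2 : ∀ j ∈ univ.filter (fun j => ¬ W j = w),
            (p + w) * (Vx j / (p + W j)) = Vx j * ((p + w) / (p + W j)) := by
          intro j _; ring
        rw [h1, Finset.sum_congr rfl h2]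
        ring
      have e2 : (p + w) * (1 - ∑ j, W j / (p * (p + W j))) =
          (p + w) - ∑ j ∈ S, W j / p -
            ∑ j ∈ univ.filter (fun j => ¬ W j = w), W j * ((p + w) / (p * (p + W j))) := by
        rw [mul_sub, mul_one, Finset.mul_sum,
          ← Finset.sum_filter_add_sum_filter_not univ (fun j => W j = w)
            (fun j => (p + w) * (W j / (p * (p + W j))))]
        have h1 : ∑ j ∈ S, (p + w) * (W j / (p * (p + W j))) = ∑ j ∈ S, W j / p := by
          refine Finset.sum_congr rfl fun j hj => ?_
          have hjw : W j = w := by simpa [hS] using hj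
          rw [hjw]
          field_simp
        have h2 : ∀ j ∈ univ.filter (fun j => ¬ W j = w),
            (p + w) * (W j / (p * (p + W j))) = W j * ((p + w) / (p * (p + W j))) := by
          intro j _; ring
        rw [h1, Finset.sum_congr rfl h2]
        ring
      rw [mul_sub, mul_left_comm, e1, mul_left_comm, e2]
    rw [hlhs, hrhs, H p hp0 hWp]
  -- limits
  have T0 : Tendsto (fun p : ℝ => p + w) (𝓝 (-w)) (𝓝 0) := by
    have := (tendsto_id (x := 𝓝 (-w))).add (tendsto_const_nhds (x := w))
    simpa using this
  have Tf : Tendsto f (𝓝 (-w)) (𝓝 (∑ j ∈ S, Vt j)) := by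
    have hterm : Tendsto (fun p : ℝ => (p + w) * Ut +
        ∑ j ∈ univ.filter (fun j => ¬ W j = w), Vt j * ((p + w) / (p + W j)))
        (𝓝 (-w)) (𝓝 0) := by
      have h1 : Tendsto (fun p : ℝ => (p + w) * Ut) (𝓝 (-w)) (𝓝 0) := by
        simpa using T0.mul (tendsto_const_nhds (x := Ut))
      have h2 : Tendsto (fun p : ℝ =>
          ∑ j ∈ univ.filter (fun j => ¬ W j = w), Vt j * ((p + w) / (p + W j)))
          (𝓝 (-w)) (𝓝 (∑ j ∈ univ.filter (fun j => ¬ W j = w), (0:ℝ))) := by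
        refine tendsto_finset_sum _ fun j hj => ?_
        have hjw : W j ≠ w := by simpa using (Finset.mem_filter.1 hj).2
        have hd : (-w) + W j ≠ 0 := by intro h; apply hjw; linarith
        have : Tendsto (fun p : ℝ => Vt j * ((p + w) / (p + W j))) (𝓝 (-w))
            (𝓝 (Vt j * (0 / (-w + W j)))) := by
          exact tendsto_const_nhds.mul (T0.div ((tendsto_id).add tendsto_const_nhds) hd)
        simpa using this
      have := h1.add h2
      simpa using this
    have := (tendsto_const_nhds (x := ∑ j ∈ S, Vt j)).add hterm
    simpa [hf] using this
  have TA : Tendsto A (𝓝 (-w)) (𝓝 (A (-w))) := by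
    refine tendsto_finset_sum _ fun i _ => ?_
    exact (tendsto_const_nhds.mul ((tendsto_id (x := 𝓝 (-w))).pow _))
  have TB : Tendsto B (𝓝 (-w)) (𝓝 (B (-w))) := by
    refine tendsto_finset_sum _ fun i _ => ?_
    exact (tendsto_const_nhds.mul ((tendsto_id (x := 𝓝 (-w))).pow _))
  have Tg : Tendsto g (𝓝 (-w))
      (𝓝 (A (-w) * (∑ j ∈ S, Vx j) - B (-w) * (S.card : ℝ))) := by
    have h1 : Tendsto (fun p : ℝ => (p + w) * Ux + ∑ j ∈ S, Vx j +
        ∑ j ∈ univ.filter (fun j => ¬ W j = w), Vx j * ((p + w) / (p + W j)))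
        (𝓝 (-w)) (𝓝 (∑ j ∈ S, Vx j)) := by
      have ha : Tendsto (fun p : ℝ => (p + w) * Ux) (𝓝 (-w)) (𝓝 0) := by
        simpa using T0.mul (tendsto_const_nhds (x := Ux))
      have hb : Tendsto (fun p : ℝ =>
          ∑ j ∈ univ.filter (fun j => ¬ W j = w), Vx j * ((p + w) / (p + W j)))
          (𝓝 (-w)) (𝓝 0) := by
        have : Tendsto (fun p : ℝ =>
            ∑ j ∈ univ.filter (fun j => ¬ W j = w), Vx j * ((p + w) / (p + W j)))
            (𝓝 (-w)) (𝓝 (∑ j ∈ univ.filter (fun j => ¬ W j = w), (0:ℝ))) := by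
          refine tendsto_finset_sum _ fun j hj => ?_
          have hjw : W j ≠ w := by simpa using (Finset.mem_filter.1 hj).2
          have hd : (-w) + W j ≠ 0 := by intro h; apply hjw; linarith
          have : Tendsto (fun p : ℝ => Vx j * ((p + w) / (p + W j))) (𝓝 (-w))
              (𝓝 (Vx j * (0 / (-w + W j)))) :=
            tendsto_const_nhds.mul (T0.div ((tendsto_id).add tendsto_const_nhds) hd)
          simpa using this
        simpa using this
      have := (ha.add (tendsto_const_nhds (x := ∑ j ∈ S, Vx j))).add hb
      simpa using this
    have h2 : Tendsto (fun p : ℝ => (p + w) - ∑ j ∈ S, W j / p -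
        ∑ j ∈ univ.filter (fun j => ¬ W j = w), W j * ((p + w) / (p * (p + W j))))
        (𝓝 (-w)) (𝓝 ((S.card : ℝ))) := by
      have ha : Tendsto (fun p : ℝ => ∑ j ∈ S, W j / p) (𝓝 (-w))
          (𝓝 (∑ j ∈ S, W j / (-w))) := by
        refine tendsto_finset_sum _ fun j hj => ?_
        exact tendsto_const_nhds.div tendsto_id (neg_ne_zero.2 hwne)
      have hval : (∑ j ∈ S, W j / (-w)) = -(S.card : ℝ) := by
        have : ∀ j ∈ S, W j / (-w) = -1 := by
          intro j hj
          have hjw : W j = w := by simpa [hS] using hj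
          rw [hjw, div_neg, div_self hwne]
        rw [Finset.sum_congr rfl this]
        simp
      have hb : Tendsto (fun p : ℝ =>
          ∑ j ∈ univ.filter (fun j => ¬ W j = w), W j * ((p + w) / (p * (p + W j))))
          (𝓝 (-w)) (𝓝 0) := by
        have : Tendsto (fun p : ℝ =>
            ∑ j ∈ univ.filter (fun j => ¬ W j = w), W j * ((p + w) / (p * (p + W j))))
            (𝓝 (-w)) (𝓝 (∑ j ∈ univ.filter (fun j => ¬ W j = w), (0:ℝ))) := by
          refine tendsto_finset_sum _ fun j hj => ?_
          have hjw : W j ≠ w := by simpa using (Finset.mem_filter.1 hj).2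
          have hd : (-w) * ((-w) + W j) ≠ 0 :=
            mul_ne_zero (neg_ne_zero.2 hwne) (by intro h; apply hjw; linarith)
          have : Tendsto (fun p : ℝ => W j * ((p + w) / (p * (p + W j)))) (𝓝 (-w))
              (𝓝 (W j * (0 / ((-w) * ((-w) + W j))))) :=
            tendsto_const_nhds.mul (T0.div (tendsto_id.mul (tendsto_id.add tendsto_const_nhds)) hd)
          simpa using this
        simpa using this
      have := (T0.sub (ha.congr' (by rfl))).sub hb
      rw [hval] at this
      simpa using this
    have := (TA.mul h1).sub (TB.mul h2)
    exact this
  -- equality of limits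
  have hfg' : f =ᶠ[𝓝[s] (-w)] g :=
    eventually_nhdsWithin_of_forall hfg
  have := tendsto_nhds_unique ((Tf.mono_left nhdsWithin_le_nhds).congr' hfg')
    (Tg.mono_left nhdsWithin_le_nhds)
  rw [hA, hB] at this
  rw [this]
  ring


lemma dense_ne_union_interior {X : Type*} [TopologicalSpace X]
    {f g : X → ℝ} :
    Dense ({q | f q ≠ g q} ∪ interior {q | f q = g q}) := by
  set E : Set X := {q | f q = g q} with hE
  have hU : ({q | f q ≠ g q} ∪ interior E) = (E \ interior E)ᶜ := by
    ext q
    by_cases h : f q = g q <;> simp [hE, h]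
  rw [hU, ← interior_eq_empty_iff_dense_compl]
  apply Set.eq_empty_iff_forall_notMem.2
  intro q hq
  have h1 : q ∈ interior E := interior_mono Set.diff_subset hq
  exact (interior_subset hq).2 h1

end auxiliary

/-- The Lax function `L(x,t,p) = p + u + ∑_k ln(1 + v^k/p)`. -/
noncomputable def laxL (m : ℕ) (u : ℝ → ℝ → ℝ) (v : Fin m → ℝ → ℝ → ℝ)
    (x t p : ℝ) : ℝ :=
  p + u x t + ∑ k : Fin m, Real.log (1 + v k x t / p)

/-- A Laurent family for `Lⁿ`: smooth coefficients `a i` (integers `i ≤ n`,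
encoded as `a : ℤ → ℝ → ℝ → ℝ` vanishing above `n`), with `a n = 1`, such that
`Lⁿ = ∑_{i ≤ n} a_i pⁱ`, absolutely convergent for `p > 1 + max_k v^k`, and
termwise differentiable in `x` and in `t`. -/
structure LaurentFamily (m n : ℕ) (u : ℝ → ℝ → ℝ) (v : Fin m → ℝ → ℝ → ℝ)
    (a : ℤ → ℝ → ℝ → ℝ) : Prop where
  smooth : ∀ i, ContDiff ℝ (⊤ : ℕ∞) (fun q : ℝ × ℝ => a i q.1 q.2)
  top : ∀ x t, a n x t = 1
  vanish : ∀ i : ℤ, (n : ℤ) < i → ∀ x t, a i x t = 0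
  abs_summable : ∀ x t p, (∀ k, 1 + v k x t < p) →
    Summable (fun j : ℕ => |a ((n : ℤ) - j) x t * p ^ ((n : ℤ) - j)|)
  expansion : ∀ x t p, (∀ k, 1 + v k x t < p) →
    laxL m u v x t p ^ n = ∑' j : ℕ, a ((n : ℤ) - j) x t * p ^ ((n : ℤ) - j)
  abs_summable_x : ∀ x t p, (∀ k, 1 + v k x t < p) →
    Summable (fun j : ℕ => |pdx (a ((n : ℤ) - j)) x t * p ^ ((n : ℤ) - j)|)
  termwise_x : ∀ x t p, (∀ k, 1 + v k x t < p) →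
    HasDerivAt (fun y => laxL m u v y t p ^ n)
      (∑' j : ℕ, pdx (a ((n : ℤ) - j)) x t * p ^ ((n : ℤ) - j)) x
  abs_summable_t : ∀ x t p, (∀ k, 1 + v k x t < p) →
    Summable (fun j : ℕ => |pdt (a ((n : ℤ) - j)) x t * p ^ ((n : ℤ) - j)|)
  termwise_t : ∀ x t p, (∀ k, 1 + v k x t < p) →
    HasDerivAt (fun s => laxL m u v x s p ^ n)
      (∑' j : ℕ, pdt (a ((n : ℤ) - j)) x t * p ^ ((n : ℤ) - j)) t

/-- The Lax flow at level `n`: the identity `L_t = {(Lⁿ)_{≥1}, L}`, valid for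
all `(x,t)` and all `p > 1 + max_k v^k(x,t)`. -/
def LaxFlow (m n : ℕ) (u : ℝ → ℝ → ℝ) (v : Fin m → ℝ → ℝ → ℝ)
    (a : ℤ → ℝ → ℝ → ℝ) : Prop :=
  ∀ x t p, (∀ k, 1 + v k x t < p) →
    pdt u x t + ∑ k : Fin m, pdt (v k) x t / (p + v k x t) =
      (∑ i ∈ Icc 1 n, (i : ℝ) * a i x t * p ^ (i - 1)) *
          (pdx u x t + ∑ k : Fin m, pdx (v k) x t / (p + v k x t)) -
        (∑ i ∈ Icc 1 n, pdx (a i) x t * p ^ i) *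
          (1 - ∑ k : Fin m, v k x t / (p * (p + v k x t)))

/-- Lemma 1: if the Lax flow at level `n` holds, then the
function `∑_{i=1}^n (-1)^{i-1} a_i (v^k)^i` is an `x`-antiderivative of
`v^k_t`. -/
theorem statement3 (m n : ℕ) (hm : 1 ≤ m) (hn : 2 ≤ n)
    (u : ℝ → ℝ → ℝ) (v : Fin m → ℝ → ℝ → ℝ)
    (hu : ContDiff ℝ (⊤ : ℕ∞) (fun q : ℝ × ℝ => u q.1 q.2))
    (hv : ∀ k, ContDiff ℝ (⊤ : ℕ∞) (fun q : ℝ × ℝ => v k q.1 q.2))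
    (hvpos : ∀ k x t, 0 < v k x t)
    (a : ℤ → ℝ → ℝ → ℝ)
    (hLF : LaurentFamily m n u v a)
    (hflow : LaxFlow m n u v a) :
    ∀ (k : Fin m) (x t : ℝ),
      deriv (fun y => ∑ i ∈ Finset.Icc 1 n,
          (-1 : ℝ) ^ (i - 1) * a i y t * v k y t ^ i) x = pdt (v k) x t := by
  intro k
  classical
  -- the defect function G
  set G : ℝ × ℝ → ℝ := fun q =>
    (∑ i ∈ Icc 1 n, (i : ℝ) * a i q.1 q.2 * (-(v k q.1 q.2)) ^ (i - 1)) *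
        pdx (v k) q.1 q.2 -
      (∑ i ∈ Icc 1 n, pdx (a i) q.1 q.2 * (-(v k q.1 q.2)) ^ i) -
      pdt (v k) q.1 q.2 with hG
  have hGcont : Continuous G := by
    apply Continuous.sub
    apply Continuous.sub
    · refine (continuous_finset_sum (Icc 1 n) fun (i : ℕ) _ => ?_).mul (continuous_pdx (hv k))
      exact (continuous_const.mul (hLF.smooth (i : ℤ)).continuous).mul
          ((((hv k).continuous).neg).pow _)
    · refine continuous_finset_sum (Icc 1 n) fun (i : ℕ) _ => ?_
      exact (continuous_pdx (hLF.smooth (i : ℤ))).mul ((((hv k).continuous).neg).pow _)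
    · exact continuous_pdt (hv k)
  -- the dense set of good points
  set D : Set (ℝ × ℝ) := ⋂ jl : Fin m × Fin m,
    ({q : ℝ × ℝ | v jl.1 q.1 q.2 ≠ v jl.2 q.1 q.2} ∪
      interior {q : ℝ × ℝ | v jl.1 q.1 q.2 = v jl.2 q.1 q.2}) with hD
  have hDdense : Dense D := by
    apply dense_iInter_of_isOpen
    · intro jl
      exact (isOpen_ne_fun (hv jl.1).continuous (hv jl.2).continuous).union isOpen_interior
    · intro jl
      exact dense_ne_union_interior
  -- G vanishes on D
  have hG0 : ∀ q ∈ D, G q = 0 := by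
    rintro ⟨x, t⟩ hq
    set w := v k x t with hwdef
    set W : Fin m → ℝ := fun j => v j x t with hW
    have hWpos : ∀ j, 0 < W j := fun j => hvpos j x t
    have Hext := core_ext n (pdt u x t) (pdx u x t)
      (fun j => pdt (v j) x t) (fun j => pdx (v j) x t) W
      (fun i => a i x t) (fun i => pdx (a i) x t) hWpos (fun p hp => hflow x t p hp)
    have Hres := core_residue n (pdt u x t) (pdx u x t)
      (fun j => pdt (v j) x t) (fun j => pdx (v j) x t) W
      (fun i => a i x t) (fun i => pdx (a i) x t) hWpos k Hext
    -- all members of the class agree with k near (x,t)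
    have hclass : ∀ j, W j = W k →
        pdt (v j) x t = pdt (v k) x t ∧ pdx (v j) x t = pdx (v k) x t := by
      intro j hjw
      have hq' := Set.mem_iInter.1 hq (j, k)
      have hint : ((x, t) : ℝ × ℝ) ∈
          interior {q : ℝ × ℝ | v j q.1 q.2 = v k q.1 q.2} := by
        rcases hq' with h | h
        · exact absurd hjw h
        · exact h
      have hev : ∀ᶠ q' in 𝓝 ((x, t) : ℝ × ℝ), v j q'.1 q'.2 = v k q'.1 q'.2 :=
        Filter.mem_of_superset (isOpen_interior.mem_nhds hint) interior_subset
      constructor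
      · apply Filter.EventuallyEq.deriv_eq
        have hc : Tendsto (fun s : ℝ => ((x, s) : ℝ × ℝ)) (𝓝 t) (𝓝 (x, t)) :=
          ((continuous_const.prodMk continuous_id).tendsto t)
        exact hc.eventually hev
      · apply Filter.EventuallyEq.deriv_eq
        have hc : Tendsto (fun y : ℝ => ((y, t) : ℝ × ℝ)) (𝓝 x) (𝓝 (x, t)) :=
          ((continuous_id.prodMk continuous_const).tendsto x)
        exact hc.eventually hev
    set S : Finset (Fin m) := univ.filter (fun j => W j = W k) with hSdef
    have hkS : k ∈ S := by simp [hSdef]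
    have hcard : (0 : ℝ) < (S.card : ℝ) := by
      exact_mod_cast Finset.card_pos.2 ⟨k, hkS⟩
    have ht : ∑ j ∈ S, pdt (v j) x t = (S.card : ℝ) * pdt (v k) x t := by
      rw [Finset.sum_congr rfl fun j hj =>
        (hclass j (by simpa [hSdef] using hj)).1]
      simp [mul_comm]
    have hx : ∑ j ∈ S, pdx (v j) x t = (S.card : ℝ) * pdx (v k) x t := by
      rw [Finset.sum_congr rfl fun j hj =>
        (hclass j (by simpa [hSdef] using hj)).2]
      simp [mul_comm]
    rw [ht, hx] at Hres
    have : (S.card : ℝ) * pdt (v k) x t = (S.card : ℝ) *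
        ((∑ i ∈ Icc 1 n, (i : ℝ) * a i x t * (-W k) ^ (i - 1)) * pdx (v k) x t -
          ∑ i ∈ Icc 1 n, pdx (a i) x t * (-W k) ^ i) := by
      rw [Hres]; ring
    have hkey := mul_left_cancel₀ (ne_of_gt hcard) this
    show _ = (0 : ℝ)
    simp only [hG]
    rw [hkey]
    ring
  -- hence G = 0 everywhere
  have hGzero : ∀ x t : ℝ, G (x, t) = 0 := by
    have := Continuous.ext_on hDdense hGcont continuous_const
      (fun q hq => hG0 q hq)
    intro x t
    exact congrFun this (x, t)
  -- now the derivative computation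
  intro x t
  have hvk := hv k
  have hdv : HasDerivAt (fun y => v k y t) (pdx (v k) x t) x := hasDerivAt_pdx hvk x t
  have hder : HasDerivAt
      (fun y => ∑ i ∈ Finset.Icc 1 n, (-1 : ℝ) ^ (i - 1) * a i y t * v k y t ^ i)
      (∑ i ∈ Finset.Icc 1 n,
        ((-1 : ℝ) ^ (i - 1) * pdx (a i) x t * v k x t ^ i +
          (-1 : ℝ) ^ (i - 1) * a i x t *
            ((i : ℝ) * v k x t ^ (i - 1) * pdx (v k) x t))) x := by
    apply HasDerivAt.fun_sum
    intro i _
    have hai : HasDerivAt (fun y => a i y t) (pdx (a i) x t) x :=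
      hasDerivAt_pdx (hLF.smooth i) x t
    have := ((hai.const_mul ((-1 : ℝ) ^ (i - 1))).mul (hdv.pow i))
    first
    | exact this
    | · convert this using 1
        ring
  rw [hder.deriv]
  -- use G = 0
  have hkey := hGzero x t
  simp only [hG] at hkey
  have hres : pdt (v k) x t =
      (∑ i ∈ Icc 1 n, (i : ℝ) * a i x t * (-(v k x t)) ^ (i - 1)) * pdx (v k) x t -
        ∑ i ∈ Icc 1 n, pdx (a i) x t * (-(v k x t)) ^ i := by linarith
  rw [hres, Finset.sum_mul, ← Finset.sum_sub_distrib]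
  refine Finset.sum_congr rfl fun i hi => ?_
  have hi1 : 1 ≤ i := (Finset.mem_Icc.1 hi).1
  have hpow : (-(v k x t)) ^ i = (-(v k x t)) ^ (i - 1) * (-(v k x t)) := by
    rw [← pow_succ]
    congr 1
    omega
  have hneg : (-(v k x t)) ^ (i - 1) = (-1 : ℝ) ^ (i - 1) * v k x t ^ (i - 1) := by
    rw [neg_pow]
  have hpowv : v k x t ^ i = v k x t ^ (i - 1) * v k x t := by
    rw [← pow_succ]
    congr 1
    omega
  rw [hpow, hneg, hpowv]
  ring
end

section
/- Let m ≥ 1, n ≥ 2 be integers, let u, v¹, …, vᵐ : ℝ² → ℝ be smooth with v^k(x,t) > 0 for all (x,t), let (a_i)_{i≤n} be a Laurent family for Lⁿ, and suppose the Lax flow at level n holds. Then for every (x,t): u_t = ∂_x a_0, i.e. the coefficient a_0 is an x-antiderivative of u_t. -/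
open Finset

open Filter Topology in
lemma aux_zpow_anti {p₀ p : ℝ} (hp₀ : 0 < p₀) (hp : p₀ ≤ p) (k : ℕ) :
    p ^ (-(k:ℤ)) ≤ p₀ ^ (-(k:ℤ)) := by
  rw [zpow_neg, zpow_neg, zpow_natCast, zpow_natCast]
  gcongr

open Filter Topology in
/-- Limit of a Laurent tail series at infinity is its constant coefficient. -/
lemma aux_tsum_tendsto (c : ℕ → ℝ) (p₀ : ℝ) (hp₀ : 0 < p₀)
    (h : Summable fun j : ℕ => |c j * p₀ ^ (-(j:ℤ))|) :
    Tendsto (fun p : ℝ => ∑' j : ℕ, c j * p ^ (-(j:ℤ))) atTop (𝓝 (c 0)) := by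
  have hg : (∑' j : ℕ, (if j = 0 then c 0 else 0)) = c 0 := tsum_ite_eq 0 (fun _ => c 0)
  have := tendsto_tsum_of_dominated_convergence (f := fun (p : ℝ) (j : ℕ) => c j * p ^ (-(j:ℤ)))
      (g := fun j : ℕ => if j = 0 then c 0 else 0)
      (bound := fun j => |c j * p₀ ^ (-(j:ℤ))|) (𝓕 := atTop) h ?_ ?_
  · rwa [hg] at this
  · intro k
    by_cases hk : k = 0
    · subst hk; simp
    · simp only [hk, if_false]
      have : Tendsto (fun p : ℝ => p ^ (-(k:ℤ))) atTop (𝓝 0) := by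
        apply tendsto_zpow_atTop_zero
        simpa using Nat.pos_of_ne_zero hk
      simpa using this.const_mul (c k)
  · filter_upwards [eventually_ge_atTop p₀] with p hp
    intro k
    rw [Real.norm_eq_abs, abs_mul, abs_mul,
      abs_of_pos (zpow_pos (lt_of_lt_of_le hp₀ hp) _), abs_of_pos (zpow_pos hp₀ _)]
    exact mul_le_mul_of_nonneg_left (aux_zpow_anti hp₀ hp k) (abs_nonneg _)

open Filter Topology in
/-- All coefficients of a vanishing Laurent series vanish. -/
lemma aux_coeffs_zero (c : ℕ → ℝ) (P : ℝ) (hP : 0 < P)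
    (habs : ∀ p : ℝ, P < p → Summable fun j : ℕ => |c j * p ^ (-(j:ℤ))|)
    (hzero : ∀ p : ℝ, P < p → ∑' j : ℕ, c j * p ^ (-(j:ℤ)) = 0) :
    ∀ j, c j = 0 := by
  intro J
  induction J using Nat.strong_induction_on with
  | _ J IH =>
  have key : ∀ p : ℝ, P < p → ∑' j : ℕ, c (j + J) * p ^ (-(j:ℤ)) = 0 := by
    intro p hp
    have hp0 : (0:ℝ) < p := hP.trans hp
    have hsum : Summable fun j : ℕ => c j * p ^ (-(j:ℤ)) := (habs p hp).of_abs
    have h1 := Summable.sum_add_tsum_nat_add (f := fun j : ℕ => c j * p ^ (-(j:ℤ))) J hsum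
    rw [hzero p hp] at h1
    have h2 : ∑ i ∈ Finset.range J, c i * p ^ (-(i:ℤ)) = 0 := by
      apply Finset.sum_eq_zero
      intro i hi
      rw [IH i (Finset.mem_range.mp hi), zero_mul]
    rw [h2, zero_add] at h1
    have h3 : ∀ j : ℕ, c (j + J) * p ^ (-((j + J : ℕ):ℤ))
        = p ^ (-(J:ℤ)) * (c (j + J) * p ^ (-(j:ℤ))) := by
      intro j
      rw [show (-((j + J : ℕ):ℤ)) = (-(j:ℤ)) + (-(J:ℤ)) by push_cast; ring,
        zpow_add₀ (ne_of_gt hp0)]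
      ring
    rw [tsum_congr h3, tsum_mul_left] at h1
    rcases mul_eq_zero.mp h1 with h | h
    · exact absurd h (zpow_ne_zero _ (ne_of_gt hp0))
    · exact h
  have hP1 : P < P + 1 := by linarith
  have h0 : (0:ℝ) < P + 1 := by linarith
  have hshift : Summable fun j : ℕ => |c (j + J) * (P + 1) ^ (-(j:ℤ))| := by
    have h4 := (summable_nat_add_iff (f := fun j : ℕ => |c j * (P+1) ^ (-(j:ℤ))|) J).2 (habs _ hP1)
    have h5 := h4.mul_left ((P+1) ^ (J:ℤ))
    apply h5.congr
    intro j
    have hcancel : (P+1:ℝ)^(J:ℤ) * (P+1)^(-(J:ℤ)) = 1 := by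
      rw [← zpow_add₀ (ne_of_gt h0)]; simp
    rw [show (-((j + J : ℕ):ℤ)) = (-(j:ℤ)) + (-(J:ℤ)) by push_cast; ring,
      zpow_add₀ (ne_of_gt h0)]
    simp only [abs_mul]
    rw [abs_of_pos (zpow_pos h0 (-(J:ℤ)))]
    linear_combination (|c (j+J)| * |(P+1:ℝ) ^ (-(j:ℤ))|) * hcancel
  have hlim := aux_tsum_tendsto (fun j => c (j + J)) (P + 1) h0 hshift
  have hev : (fun p : ℝ => ∑' j : ℕ, c (j + J) * p ^ (-(j:ℤ))) =ᶠ[atTop] fun _ => 0 := by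
    filter_upwards [eventually_gt_atTop P] with p hp
    exact key p hp
  have := tendsto_nhds_unique (hlim.congr' hev) tendsto_const_nhds
  simpa using this

/-- Summability is unaffected by raising the top exponent. -/
lemma aux_shift_summable (c : ℤ → ℝ) (N : ℤ) (k : ℕ) (p : ℝ)
    (h : Summable fun j : ℕ => |c (N - j) * p ^ (N - (j:ℤ))|) :
    Summable fun j : ℕ => |c (N + k - j) * p ^ (N + k - (j:ℤ))| := by
  rw [← summable_nat_add_iff k]
  apply h.congr
  intro j
  congr 2 <;> push_cast <;> ring_nf

/-- The sum is unaffected by raising the top exponent, if coefficients vanish above `N`. -/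
lemma aux_shift_tsum (c : ℤ → ℝ) (N : ℤ) (k : ℕ) (p : ℝ)
    (hvan : ∀ e : ℤ, N < e → c e = 0)
    (h : Summable fun j : ℕ => |c (N - j) * p ^ (N - (j:ℤ))|) :
    ∑' j : ℕ, c (N + k - j) * p ^ (N + k - (j:ℤ)) = ∑' j : ℕ, c (N - j) * p ^ (N - (j:ℤ)) := by
  have hsum : Summable fun j : ℕ => c (N + k - j) * p ^ (N + k - (j:ℤ)) :=
    ((aux_shift_summable c N k p h).of_abs)
  have h1 := Summable.sum_add_tsum_nat_add (f := fun j : ℕ => c (N + k - j) * p ^ (N + k - (j:ℤ))) k hsum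
  have h2 : ∑ i ∈ Finset.range k, c (N + k - i) * p ^ (N + k - (i:ℤ)) = 0 := by
    apply Finset.sum_eq_zero
    intro i hi
    have : N < N + k - i := by
      have := Finset.mem_range.mp hi
      omega
    rw [hvan _ this, zero_mul]
  rw [h2, zero_add] at h1
  rw [← h1]
  apply tsum_congr
  intro j
  congr 2 <;> push_cast <;> ring_nf

/-- Extraction of coefficients for a series with top exponent `N`. -/
lemma aux_coeffs_zero_top (c : ℤ → ℝ) (N : ℤ) (P : ℝ) (hP : 0 < P)
    (habs : ∀ p : ℝ, P < p → Summable fun j : ℕ => |c (N - j) * p ^ (N - (j:ℤ))|)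
    (hzero : ∀ p : ℝ, P < p → ∑' j : ℕ, c (N - j) * p ^ (N - (j:ℤ)) = 0) :
    ∀ j : ℕ, c (N - j) = 0 := by
  apply aux_coeffs_zero (fun j => c (N - j)) P hP
  · intro p hp
    have hp0 : (0:ℝ) < p := hP.trans hp
    have := (habs p hp).mul_left (|p ^ (-N)|)
    apply this.congr
    intro j
    rw [← abs_mul]
    congr 1
    rw [show N - (j:ℤ) = N + (-(j:ℤ)) by ring, zpow_add₀ (ne_of_gt hp0)]
    have hc : p ^ (-N) * p ^ N = 1 := by rw [← zpow_add₀ (ne_of_gt hp0)]; simp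
    linear_combination (c (N + -(j:ℤ)) * p ^ (-(j:ℤ))) * hc
  · intro p hp
    have hp0 : (0:ℝ) < p := hP.trans hp
    have h1 := hzero p hp
    have h2 : ∀ j : ℕ, c (N - j) * p ^ (N - (j:ℤ)) = p ^ N * (c (N - j) * p ^ (-(j:ℤ))) := by
      intro j
      rw [show N - (j:ℤ) = N + (-(j:ℤ)) by ring, zpow_add₀ (ne_of_gt hp0)]
      ring
    rw [tsum_congr h2, tsum_mul_left] at h1
    rcases mul_eq_zero.mp h1 with h | h
    · exact absurd h (zpow_ne_zero _ (ne_of_gt hp0))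
    · exact h

lemma aux_log_deriv_p (w : ℝ) (p : ℝ) (hp : 0 < p) (hw : 0 < w) :
    HasDerivAt (fun q : ℝ => Real.log (1 + w / q)) (-(w / (p * (p + w)))) p := by
  have h1 : HasDerivAt (fun q : ℝ => 1 + w / q) (w * -(p^2)⁻¹) p := by
    have := ((hasDerivAt_inv (ne_of_gt hp)).const_mul w).const_add 1
    simpa [div_eq_mul_inv] using this
  have hne : 1 + w / p ≠ 0 := by positivity
  have := h1.log hne
  convert this using 1
  field_simp

lemma aux_L_deriv_p (m : ℕ) (u : ℝ → ℝ → ℝ) (v : Fin m → ℝ → ℝ → ℝ) (x t p : ℝ)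
    (hp : 0 < p) (hvpos : ∀ k, 0 < v k x t) :
    HasDerivAt (fun q : ℝ => laxL m u v x t q)
      (1 - ∑ k : Fin m, v k x t / (p * (p + v k x t))) p := by
  have h1 : HasDerivAt (fun q : ℝ => q + u x t) 1 p := by
    simpa using (hasDerivAt_id p).add_const (u x t)
  have h2 : HasDerivAt (fun q : ℝ => ∑ k : Fin m, Real.log (1 + v k x t / q))
      (∑ k : Fin m, -(v k x t / (p * (p + v k x t)))) p :=
    HasDerivAt.fun_sum fun k _ => aux_log_deriv_p (v k x t) p hp (hvpos k)
  convert h1.add h2 using 1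
  · rfl
  · rfl
  · rfl
  · simp [sub_eq_add_neg, Finset.sum_neg_distrib]

lemma aux_diff_t (f : ℝ → ℝ → ℝ) (hf : ContDiff ℝ (⊤ : ℕ∞) (fun q : ℝ × ℝ => f q.1 q.2)) (x t : ℝ) :
    HasDerivAt (fun s => f x s) (pdt f x t) t := by
  have hU : Differentiable ℝ (fun q : ℝ × ℝ => f q.1 q.2) := hf.differentiable (by simp)
  have hd : Differentiable ℝ (fun s : ℝ => f x s) :=
    hU.comp ((differentiable_const x).prodMk differentiable_id)
  exact (hd t).hasDerivAt

lemma aux_diff_x (f : ℝ → ℝ → ℝ) (hf : ContDiff ℝ (⊤ : ℕ∞) (fun q : ℝ × ℝ => f q.1 q.2)) (x t : ℝ) :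
    HasDerivAt (fun y => f y t) (pdx f x t) x := by
  have hU : Differentiable ℝ (fun q : ℝ × ℝ => f q.1 q.2) := hf.differentiable (by simp)
  have hd : Differentiable ℝ (fun y : ℝ => f y t) :=
    hU.comp (differentiable_id.prodMk (differentiable_const t))
  exact (hd x).hasDerivAt

lemma aux_L_deriv_t (m : ℕ) (u : ℝ → ℝ → ℝ) (v : Fin m → ℝ → ℝ → ℝ) (x t p : ℝ)
    (hp : 0 < p)
    (hu : ContDiff ℝ (⊤ : ℕ∞) (fun q : ℝ × ℝ => u q.1 q.2))
    (hv : ∀ k, ContDiff ℝ (⊤ : ℕ∞) (fun q : ℝ × ℝ => v k q.1 q.2))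
    (hvpos : ∀ k, 0 < v k x t) :
    HasDerivAt (fun s => laxL m u v x s p)
      (pdt u x t + ∑ k : Fin m, pdt (v k) x t / (p + v k x t)) t := by
  have h1 : HasDerivAt (fun s => p + u x s) (pdt u x t) t := (aux_diff_t u hu x t).const_add p
  have h2 : ∀ k : Fin m, HasDerivAt (fun s => Real.log (1 + v k x s / p))
      (pdt (v k) x t / (p + v k x t)) t := by
    intro k
    have hin : HasDerivAt (fun s => 1 + v k x s / p) (pdt (v k) x t / p) t :=
      ((aux_diff_t (v k) (hv k) x t).div_const p).const_add 1
    have hne : 1 + v k x t / p ≠ 0 := by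
      have := hvpos k
      positivity
    have := hin.log hne
    convert this using 1
    have hpv : p + v k x t ≠ 0 := by have := hvpos k; positivity
    field_simp
  have hsum : HasDerivAt (fun s => ∑ k : Fin m, Real.log (1 + v k x s / p))
      (∑ k : Fin m, pdt (v k) x t / (p + v k x t)) t := HasDerivAt.fun_sum fun k _ => h2 k
  have h3 := h1.add hsum
  simp only [laxL]
  exact h3

lemma aux_L_deriv_x (m : ℕ) (u : ℝ → ℝ → ℝ) (v : Fin m → ℝ → ℝ → ℝ) (x t p : ℝ)
    (hp : 0 < p)
    (hu : ContDiff ℝ (⊤ : ℕ∞) (fun q : ℝ × ℝ => u q.1 q.2))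
    (hv : ∀ k, ContDiff ℝ (⊤ : ℕ∞) (fun q : ℝ × ℝ => v k q.1 q.2))
    (hvpos : ∀ k, 0 < v k x t) :
    HasDerivAt (fun y => laxL m u v y t p)
      (pdx u x t + ∑ k : Fin m, pdx (v k) x t / (p + v k x t)) x := by
  have h1 : HasDerivAt (fun y => p + u y t) (pdx u x t) x := (aux_diff_x u hu x t).const_add p
  have h2 : ∀ k : Fin m, HasDerivAt (fun y => Real.log (1 + v k y t / p))
      (pdx (v k) x t / (p + v k x t)) x := by
    intro k
    have hin : HasDerivAt (fun y => 1 + v k y t / p) (pdx (v k) x t / p) x :=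
      ((aux_diff_x (v k) (hv k) x t).div_const p).const_add 1
    have hne : 1 + v k x t / p ≠ 0 := by
      have := hvpos k
      positivity
    have := hin.log hne
    convert this using 1
    have hpv : p + v k x t ≠ 0 := by have := hvpos k; positivity
    field_simp
  have hsum : HasDerivAt (fun y => ∑ k : Fin m, Real.log (1 + v k y t / p))
      (∑ k : Fin m, pdx (v k) x t / (p + v k x t)) x := HasDerivAt.fun_sum fun k _ => h2 k
  have h3 := h1.add hsum
  simp only [laxL]
  exact h3

open Filter Topology in
/-- shifted absolute summability -/
lemma aux_abs_summable_shift (c : ℕ → ℝ) (p : ℝ) (hp : 0 < p) (k : ℕ)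
    (h : Summable fun j : ℕ => |c j * p ^ (-(j:ℤ))|) :
    Summable fun j : ℕ => |c (j + k) * p ^ (-(j:ℤ))| := by
  have h4 := (summable_nat_add_iff (f := fun j : ℕ => |c j * p ^ (-(j:ℤ))|) k).2 h
  have h5 := h4.mul_left (p ^ (k:ℤ))
  apply h5.congr
  intro j
  have hcancel : p ^ (k:ℤ) * p ^ (-(k:ℤ)) = 1 := by
    rw [← zpow_add₀ (ne_of_gt hp)]; simp
  rw [show (-((j + k : ℕ):ℤ)) = (-(j:ℤ)) + (-(k:ℤ)) by push_cast; ring,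
    zpow_add₀ (ne_of_gt hp)]
  simp only [abs_mul]
  rw [abs_of_pos (zpow_pos hp (-(k:ℤ)))]
  linear_combination (|c (j+k)| * |p ^ (-(j:ℤ))|) * hcancel

/-- normalized absolute summability -/
lemma aux_normalize_abs (c : ℕ → ℝ) (N : ℤ) (p : ℝ) (hp0 : 0 < p)
    (h : Summable fun j : ℕ => |c j * p ^ (N - (j:ℤ))|) :
    Summable fun j : ℕ => |c j * p ^ (-(j:ℤ))| := by
  have := h.mul_left (|p ^ (-N)|)
  apply this.congr
  intro j
  rw [← abs_mul]
  congr 1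
  rw [show N - (j:ℤ) = N + (-(j:ℤ)) by ring, zpow_add₀ (ne_of_gt hp0)]
  have hc : p ^ (-N) * p ^ N = 1 := by rw [← zpow_add₀ (ne_of_gt hp0)]; simp
  linear_combination (c j * p ^ (-(j:ℤ))) * hc

/-- normalized tsum -/
lemma aux_normalize_tsum (c : ℕ → ℝ) (N : ℤ) (p : ℝ) (hp0 : 0 < p) :
    ∑' j : ℕ, c j * p ^ (N - (j:ℤ)) = p ^ N * ∑' j : ℕ, c j * p ^ (-(j:ℤ)) := by
  rw [← tsum_mul_left]
  apply tsum_congr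
  intro j
  rw [show N - (j:ℤ) = N + (-(j:ℤ)) by ring, zpow_add₀ (ne_of_gt hp0)]
  ring

/-- `1 + v k < p` holds whenever `p` exceeds `1 + ∑ v k`. -/
lemma aux_cond (m : ℕ) (w : Fin m → ℝ) (hw : ∀ k, 0 < w k) (p : ℝ)
    (hp : 1 + ∑ k : Fin m, w k < p) : ∀ k, 1 + w k < p := by
  intro k
  have h1 : w k ≤ ∑ k : Fin m, w k :=
    Finset.single_le_sum (fun i _ => (hw i).le) (Finset.mem_univ k)
  linarith

open Filter Topology in
lemma aux_an1 (m n : ℕ) (hn : 2 ≤ n) (u : ℝ → ℝ → ℝ) (v : Fin m → ℝ → ℝ → ℝ)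
    (hvpos : ∀ k x t, 0 < v k x t) (a : ℤ → ℝ → ℝ → ℝ)
    (hLF : LaurentFamily m n u v a) :
    ∀ x t, a ((n:ℤ) - 1) x t = (n : ℝ) * u x t := by
  intro x t
  set P : ℝ := 1 + ∑ k : Fin m, v k x t with hPdef
  have hP0 : 0 < P := by
    have : (0:ℝ) ≤ ∑ k : Fin m, v k x t :=
      Finset.sum_nonneg fun k _ => (hvpos k x t).le
    simp only [hPdef]; linarith
  have hcond : ∀ p : ℝ, P < p → ∀ k, 1 + v k x t < p := fun p hp =>
    aux_cond m (fun k => v k x t) (fun k => hvpos k x t) p hp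
  set c : ℕ → ℝ := fun j => a ((n:ℤ) - j) x t with hcdef
  have hc0 : c 0 = 1 := by simp [hcdef, hLF.top]
  set W : ℝ → ℝ := fun p => u x t + ∑ k : Fin m, Real.log (1 + v k x t / p) with hWdef
  set G : ℝ → ℝ := fun p => p * (laxL m u v x t p ^ n / p ^ n - 1) with hGdef
  have hW : Tendsto W atTop (𝓝 (u x t)) := by
    have hlog : ∀ k : Fin m, Tendsto (fun p : ℝ => Real.log (1 + v k x t / p)) atTop (𝓝 0) := by
      intro k
      have h1 : Tendsto (fun p : ℝ => 1 + v k x t / p) atTop (𝓝 1) := by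
        have := Tendsto.div_atTop (tendsto_const_nhds (x := v k x t)) tendsto_id
        simpa using tendsto_const_nhds.add this
      have h2 := (Real.continuousAt_log one_ne_zero).tendsto.comp h1
      simpa [Function.comp_def] using h2
    have hsum : Tendsto (fun p : ℝ => ∑ k : Fin m, Real.log (1 + v k x t / p)) atTop (𝓝 0) := by
      have := tendsto_finset_sum Finset.univ (fun k _ => hlog k)
      simpa using this
    simpa using tendsto_const_nhds.add hsum
  have hz : Tendsto (fun p : ℝ => W p / p) atTop (𝓝 0) := Tendsto.div_atTop hW tendsto_id
  have hGlim1 : Tendsto G atTop (𝓝 ((n : ℝ) * u x t)) := by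
    have hb : Tendsto (fun p : ℝ => ∑ i ∈ Finset.range n, (1 + W p / p) ^ i) atTop
        (𝓝 (n : ℝ)) := by
      have h1 : ∀ i : ℕ, Tendsto (fun p : ℝ => (1 + W p / p) ^ i) atTop (𝓝 1) := by
        intro i
        have := ((tendsto_const_nhds (x := (1:ℝ))).add hz).pow i
        simpa using this
      have := tendsto_finset_sum (Finset.range n) (fun i _ => h1 i)
      simpa using this
    have hmain := hW.mul hb
    rw [show u x t * (n:ℝ) = (n:ℝ) * u x t from mul_comm _ _] at hmain
    apply hmain.congr'
    filter_upwards [eventually_gt_atTop (0:ℝ)] with p hp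
    have hp0 : p ≠ 0 := ne_of_gt hp
    have hL : laxL m u v x t p = p + W p := by simp [laxL, hWdef]; ring
    have hx : laxL m u v x t p / p = 1 + W p / p := by
      rw [hL]; field_simp
    have hgeom := geom_sum_mul (1 + W p / p) n
    simp only [hGdef]
    rw [show laxL m u v x t p ^ n / p ^ n = (laxL m u v x t p / p) ^ n from (div_pow _ _ _).symm,
      hx]
    rw [show (1 + W p / p) ^ n - 1
        = (∑ i ∈ Finset.range n, (1 + W p / p) ^ i) * ((1 + W p / p) - 1) from (by rw [hgeom])]
    field_simp
    ring
  have hGlim2 : Tendsto G atTop (𝓝 (c 1)) := by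
    have hp₀ : (0:ℝ) < P + 1 := by linarith
    have habs : Summable fun j : ℕ => |c j * (P+1) ^ (-(j:ℤ))| :=
      aux_normalize_abs c n (P+1) hp₀ (hLF.abs_summable x t (P+1) (hcond _ (by linarith)))
    have hshift := aux_abs_summable_shift c (P+1) hp₀ 1 habs
    have hlim := aux_tsum_tendsto (fun j => c (j + 1)) (P+1) hp₀ hshift
    apply hlim.congr'
    filter_upwards [eventually_gt_atTop P] with p hp
    have hp0 : (0:ℝ) < p := hP0.trans hp
    have hpne : p ≠ 0 := ne_of_gt hp0
    have hexp := hLF.expansion x t p (hcond p hp)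
    have habsp : Summable fun j : ℕ => |c j * p ^ (-(j:ℤ))| :=
      aux_normalize_abs c n p hp0 (hLF.abs_summable x t p (hcond p hp))
    have hsump : Summable fun j : ℕ => c j * p ^ (-(j:ℤ)) := habsp.of_abs
    have h1 := Summable.sum_add_tsum_nat_add (f := fun j : ℕ => c j * p ^ (-(j:ℤ))) 1 hsump
    have h2 : laxL m u v x t p ^ n / p ^ n = ∑' j : ℕ, c j * p ^ (-(j:ℤ)) := by
      rw [hexp, aux_normalize_tsum c n p hp0]
      rw [show (p:ℝ) ^ (n:ℤ) = p ^ n from zpow_natCast p n]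
      field_simp
    simp only [hGdef]
    rw [h2, ← h1]
    rw [Finset.sum_range_one]
    simp only [Nat.cast_zero, neg_zero, zpow_zero, mul_one, hc0]
    rw [show (1:ℝ) + ∑' j : ℕ, c (j + 1) * p ^ (-((j+1:ℕ):ℤ)) - 1
      = ∑' j : ℕ, c (j + 1) * p ^ (-((j+1:ℕ):ℤ)) from by ring]
    rw [← tsum_mul_left]
    apply tsum_congr
    intro j
    rw [show (-((j + 1 : ℕ):ℤ)) = (-(j:ℤ)) + (-(1:ℤ)) by push_cast; ring,
      zpow_add₀ hpne]
    field_simp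
  have := tendsto_nhds_unique hGlim2 hGlim1
  simpa [hcdef] using this

/-- summability of the `p`-differentiated series, with a uniform bound on an interval. -/
lemma aux_deriv_series_bound (n : ℕ) (hn : 1 ≤ n) (α : ℕ → ℝ) (p₀ p₁ p₂ : ℝ)
    (h0 : 0 < p₀) (h01 : p₀ < p₁) (h12 : p₁ < p₂)
    (habs : Summable fun j : ℕ => |α j * p₀ ^ ((n:ℤ) - j)|) :
    ∃ U : ℕ → ℝ, Summable U ∧
      ∀ j : ℕ, ∀ y ∈ Set.Ioo p₁ p₂,
        |α j * (((n:ℤ) - j : ℤ) : ℝ) * y ^ ((n:ℤ) - 1 - j)| ≤ U j := by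
  have h1 : 0 < p₁ := h0.trans h01
  have h2 : 0 < p₂ := h1.trans h12
  set r : ℝ := p₀ / p₁ with hrdef
  have hr0 : 0 < r := div_pos h0 h1
  have hr1 : r < 1 := (div_lt_one h1).2 h01
  have hsum : Summable (fun j : ℕ => ((n:ℝ) + j) * r ^ j) := by
    have hs1 : Summable (fun j : ℕ => (j:ℝ) ^ 1 * r ^ j) :=
      summable_pow_mul_geometric_of_norm_lt_one 1
        (by rw [Real.norm_eq_abs, abs_of_pos hr0]; exact hr1)
    have hs2 : Summable (fun j : ℕ => (n:ℝ) * r ^ j) :=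
      (summable_geometric_of_lt_one hr0.le hr1).mul_left _
    have := hs2.add hs1
    apply this.congr
    intro j
    ring
  obtain ⟨M, hM⟩ := hsum.tendsto_atTop_zero.bddAbove_range
  have hMj : ∀ j : ℕ, ((n:ℝ) + j) * r ^ j ≤ M := fun j => hM (Set.mem_range_self j)
  refine ⟨fun j => (p₂ ^ (n - 1) * (M * p₀ ^ (-(n:ℤ)))) * |α j * p₀ ^ ((n:ℤ) - j)|,
    (habs.mul_left _), ?_⟩
  intro j y hy
  dsimp only
  have hy1 : p₁ < y := hy.1
  have hy0 : 0 < y := h1.trans hy1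
  have hyne : y ≠ 0 := ne_of_gt hy0
  have hsplit : y ^ ((n:ℤ) - 1 - j) = y ^ (n - 1) * y ^ (-(j:ℤ)) := by
    rw [show ((n:ℤ) - 1 - j) = ((n-1 : ℕ) : ℤ) + (-(j:ℤ)) by omega, zpow_add₀ hyne, zpow_natCast]
  rw [abs_mul, abs_mul]
  have hyp : |y ^ ((n:ℤ) - 1 - j)| = y ^ (n-1) * y ^ (-(j:ℤ)) := by
    rw [hsplit, abs_of_pos (by positivity)]
  rw [hyp]
  have habs2 : |α j * p₀ ^ ((n:ℤ) - j)| = |α j| * (p₀ ^ ((n:ℤ) - j)) := by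
    rw [abs_mul, abs_of_pos (zpow_pos h0 _)]
  rw [habs2]
  have key : |(((n:ℤ) - j : ℤ) : ℝ)| * (y ^ (n-1) * y ^ (-(j:ℤ)))
      ≤ p₂ ^ (n-1) * (M * p₀ ^ (-(n:ℤ))) * p₀ ^ ((n:ℤ) - j) := by
    have e1 : |(((n:ℤ) - j : ℤ) : ℝ)| ≤ (n:ℝ) + j := by
      push_cast
      calc |(n:ℝ) - j| ≤ |(n:ℝ)| + |(j:ℝ)| := abs_sub _ _
        _ = (n:ℝ) + j := by
            rw [abs_of_nonneg (by positivity), abs_of_nonneg (by positivity)]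
    have e2 : y ^ (n-1) ≤ p₂ ^ (n-1) := pow_le_pow_left₀ hy0.le (le_of_lt hy.2) _
    have e3 : y ^ (-(j:ℤ)) ≤ p₁ ^ (-(j:ℤ)) := aux_zpow_anti h1 hy1.le j
    have e4 : ((n:ℝ) + j) * p₁ ^ (-(j:ℤ)) ≤ M * p₀ ^ (-(j:ℤ)) := by
      have := hMj j
      have hrj : r ^ j = p₀ ^ j * p₁ ^ (-(j:ℤ)) := by
        rw [hrdef, div_pow, zpow_neg, zpow_natCast, div_eq_mul_inv]
      rw [hrj] at this
      have hp₀j : (0:ℝ) < p₀ ^ j := pow_pos h0 j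
      have h5 : ((n:ℝ) + j) * p₁ ^ (-(j:ℤ)) ≤ M / p₀ ^ j := by
        rw [le_div_iff₀ hp₀j]
        calc ((n:ℝ) + j) * p₁ ^ (-(j:ℤ)) * p₀ ^ j
            = ((n:ℝ) + j) * (p₀ ^ j * p₁ ^ (-(j:ℤ))) := by ring
          _ ≤ M := this
      calc ((n:ℝ) + j) * p₁ ^ (-(j:ℤ)) ≤ M / p₀ ^ j := h5
        _ = M * p₀ ^ (-(j:ℤ)) := by rw [zpow_neg, zpow_natCast, div_eq_mul_inv]
    have e5 : p₀ ^ (-(n:ℤ)) * p₀ ^ ((n:ℤ) - j) = p₀ ^ (-(j:ℤ)) := by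
      rw [← zpow_add₀ (ne_of_gt h0)]; congr 1; ring
    have hyn : 0 ≤ y ^ (n-1) := by positivity
    have hnj : 0 ≤ y ^ (-(j:ℤ)) := le_of_lt (zpow_pos hy0 _)
    calc |(((n:ℤ) - j : ℤ) : ℝ)| * (y ^ (n-1) * y ^ (-(j:ℤ)))
        ≤ ((n:ℝ) + j) * (p₂ ^ (n-1) * p₁ ^ (-(j:ℤ))) := by
          apply mul_le_mul e1 _ (by positivity) (by positivity)
          apply mul_le_mul e2 e3 hnj (by positivity)
      _ = p₂ ^ (n-1) * (((n:ℝ) + j) * p₁ ^ (-(j:ℤ))) := by ring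
      _ ≤ p₂ ^ (n-1) * (M * p₀ ^ (-(j:ℤ))) := by
          apply mul_le_mul_of_nonneg_left e4 (by positivity)
      _ = p₂ ^ (n-1) * (M * p₀ ^ (-(n:ℤ))) * p₀ ^ ((n:ℤ) - j) := by rw [← e5]; ring
  calc |α j| * |(((n:ℤ) - j : ℤ) : ℝ)| * (y ^ (n-1) * y ^ (-(j:ℤ)))
      = |α j| * (|(((n:ℤ) - j : ℤ) : ℝ)| * (y ^ (n-1) * y ^ (-(j:ℤ)))) := by ring
    _ ≤ |α j| * (p₂ ^ (n-1) * (M * p₀ ^ (-(n:ℤ))) * p₀ ^ ((n:ℤ) - j)) :=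
        mul_le_mul_of_nonneg_left key (abs_nonneg _)
    _ = p₂ ^ (n-1) * (M * p₀ ^ (-(n:ℤ))) * (|α j| * p₀ ^ ((n:ℤ) - j)) := by ring

open Filter Topology in
lemma aux_Sp (m n : ℕ) (hn : 2 ≤ n) (u : ℝ → ℝ → ℝ) (v : Fin m → ℝ → ℝ → ℝ)
    (a : ℤ → ℝ → ℝ → ℝ) (x t : ℝ)
    (hvpos : ∀ k, 0 < v k x t)
    (habs : ∀ p : ℝ, (∀ k, 1 + v k x t < p) →
      Summable (fun j : ℕ => |a ((n : ℤ) - j) x t * p ^ ((n : ℤ) - j)|))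
    (hexp : ∀ p : ℝ, (∀ k, 1 + v k x t < p) →
      laxL m u v x t p ^ n = ∑' j : ℕ, a ((n : ℤ) - j) x t * p ^ ((n : ℤ) - j))
    (p : ℝ) (hp : 1 + ∑ k : Fin m, v k x t < p) :
    Summable (fun j : ℕ =>
      |a ((n:ℤ) - j) x t * (((n:ℤ) - (j:ℤ) : ℤ) : ℝ) * p ^ ((n:ℤ) - 1 - j)|) ∧
    ∑' j : ℕ, a ((n:ℤ) - j) x t * (((n:ℤ) - (j:ℤ) : ℤ) : ℝ) * p ^ ((n:ℤ) - 1 - j)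
      = (n : ℝ) * laxL m u v x t p ^ (n - 1) *
          (1 - ∑ k : Fin m, v k x t / (p * (p + v k x t))) := by
  set P : ℝ := 1 + ∑ k : Fin m, v k x t with hPdef
  have hP0 : 0 < P := by
    have : (0:ℝ) ≤ ∑ k : Fin m, v k x t := Finset.sum_nonneg fun k _ => (hvpos k).le
    simp only [hPdef]; linarith
  have hcond : ∀ q : ℝ, P < q → ∀ k, 1 + v k x t < q := fun q hq =>
    aux_cond m (fun k => v k x t) hvpos q hq
  have hp0 : 0 < p := hP0.trans hp
  set p₀ : ℝ := P + (p - P)/4 with hp₀def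
  set p₁ : ℝ := P + (p - P)/2 with hp₁def
  set p₂ : ℝ := p + 1 with hp₂def
  have hPp₀ : P < p₀ := by simp only [hp₀def]; linarith
  have h0 : 0 < p₀ := hP0.trans hPp₀
  have h01 : p₀ < p₁ := by simp only [hp₀def, hp₁def]; linarith
  have h1p : p₁ < p := by simp only [hp₁def]; linarith
  have h12 : p₁ < p₂ := by simp only [hp₁def, hp₂def]; linarith
  have hpmem : p ∈ Set.Ioo p₁ p₂ := ⟨h1p, by simp only [hp₂def]; linarith⟩
  obtain ⟨U, hU, hbound⟩ := aux_deriv_series_bound n (by omega) (fun j => a ((n:ℤ)-j) x t)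
    p₀ p₁ p₂ h0 h01 h12 (habs p₀ (hcond p₀ hPp₀))
  set g : ℕ → ℝ → ℝ := fun j y => a ((n:ℤ)-j) x t * y ^ ((n:ℤ)-j) with hgdef
  set g' : ℕ → ℝ → ℝ := fun j y => a ((n:ℤ)-j) x t * (((n:ℤ) - (j:ℤ) : ℤ) : ℝ) * y ^ ((n:ℤ)-1-j)
    with hg'def
  have hg : ∀ (j : ℕ), ∀ y ∈ Set.Ioo p₁ p₂, HasDerivAt (g j) (g' j y) y := by
    intro j y hy
    have hyne : y ≠ 0 := ne_of_gt ((h0.trans h01).trans hy.1)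
    have h := (hasDerivAt_zpow ((n:ℤ)-(j:ℤ)) y (Or.inl hyne)).const_mul (a ((n:ℤ)-j) x t)
    simp only [hgdef, hg'def]
    rw [show (n:ℤ)-1-(j:ℤ) = ((n:ℤ)-j)-1 by ring, mul_assoc]
    exact h
  have hg' : ∀ (j : ℕ), ∀ y ∈ Set.Ioo p₁ p₂, ‖g' j y‖ ≤ U j := by
    intro j y hy
    rw [Real.norm_eq_abs]
    exact hbound j y hy
  have hg0 : Summable fun j => g j p := ((habs p (hcond p hp)).of_abs)
  have H := hasDerivAt_tsum_of_isPreconnected hU isOpen_Ioo isPreconnected_Ioo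
    hg hg' hpmem hg0 hpmem
  have heq : (fun y => laxL m u v x t y ^ n) =ᶠ[𝓝 p] (fun y => ∑' j, g j y) := by
    filter_upwards [Ioo_mem_nhds h1p hpmem.2] with y hy
    exact hexp y (hcond y ((lt_trans (lt_of_lt_of_le hPp₀ h01.le) hy.1)))
  have H2 : HasDerivAt (fun y => laxL m u v x t y ^ n) (∑' j, g' j p) p :=
    H.congr_of_eventuallyEq heq
  have H3 := (aux_L_deriv_p m u v x t p hp0 hvpos).pow n
  constructor
  · exact Summable.of_nonneg_of_le (fun j => abs_nonneg _)
      (fun j => hbound j p hpmem) hU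
  · exact H2.unique H3

/-- Lemma 2: if the Lax flow at level `n` holds, then
`u_t = ∂_x a_0`, i.e. `a_0` is an `x`-antiderivative of `u_t`. -/
theorem statement5 (m n : ℕ) (hm : 1 ≤ m) (hn : 2 ≤ n)
    (u : ℝ → ℝ → ℝ) (v : Fin m → ℝ → ℝ → ℝ)
    (hu : ContDiff ℝ (⊤ : ℕ∞) (fun q : ℝ × ℝ => u q.1 q.2))
    (hv : ∀ k, ContDiff ℝ (⊤ : ℕ∞) (fun q : ℝ × ℝ => v k q.1 q.2))
    (hvpos : ∀ k x t, 0 < v k x t)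
    (a : ℤ → ℝ → ℝ → ℝ)
    (hLF : LaurentFamily m n u v a)
    (hflow : LaxFlow m n u v a) :
    ∀ x t : ℝ, pdt u x t = pdx (a 0) x t := by
  intro x t
  have hvpos' : ∀ k, 0 < v k x t := fun k => hvpos k x t
  set P : ℝ := 1 + ∑ k : Fin m, v k x t with hPdef
  have hP0 : 0 < P := by
    have : (0:ℝ) ≤ ∑ k : Fin m, v k x t := Finset.sum_nonneg fun k _ => (hvpos k x t).le
    simp only [hPdef]; linarith
  have hcond : ∀ q : ℝ, P < q → ∀ k, 1 + v k x t < q := fun q hq =>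
    aux_cond m (fun k => v k x t) hvpos' q hq
  -- vanishing of coefficients above level n
  have hvanα : ∀ e : ℤ, (n:ℤ) < e → a e x t = 0 := fun e he => hLF.vanish e he x t
  have hvanT : ∀ e : ℤ, (n:ℤ) < e → pdt (a e) x t = 0 := by
    intro e he
    have h0 : (fun s => a e x s) = fun _ => 0 := funext fun s => hLF.vanish e he x s
    simp only [pdt]
    rw [h0]
    simp
  have hvanX : ∀ e : ℤ, (n:ℤ) < e → pdx (a e) x t = 0 := by
    intro e he
    have h0 : (fun y => a e y t) = fun _ => 0 := funext fun y => hLF.vanish e he y t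
    simp only [pdx]
    rw [h0]
    simp
  -- the three series identities, valid for p > P
  have hT : ∀ p : ℝ, P < p →
      ∑' j : ℕ, pdt (a ((n : ℤ) - j)) x t * p ^ ((n : ℤ) - j)
        = (n:ℝ) * laxL m u v x t p ^ (n-1) *
          (pdt u x t + ∑ k : Fin m, pdt (v k) x t / (p + v k x t)) := by
    intro p hp
    exact (hLF.termwise_t x t p (hcond p hp)).unique
      ((aux_L_deriv_t m u v x t p (hP0.trans hp) hu hv hvpos').pow n)
  have hX : ∀ p : ℝ, P < p →
      ∑' j : ℕ, pdx (a ((n : ℤ) - j)) x t * p ^ ((n : ℤ) - j)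
        = (n:ℝ) * laxL m u v x t p ^ (n-1) *
          (pdx u x t + ∑ k : Fin m, pdx (v k) x t / (p + v k x t)) := by
    intro p hp
    exact (hLF.termwise_x x t p (hcond p hp)).unique
      ((aux_L_deriv_x m u v x t p (hP0.trans hp) hu hv hvpos').pow n)
  have hS : ∀ p : ℝ, P < p →
      Summable (fun j : ℕ =>
        |a ((n:ℤ) - j) x t * (((n:ℤ) - (j:ℤ) : ℤ) : ℝ) * p ^ ((n:ℤ) - 1 - j)|) ∧
      ∑' j : ℕ, a ((n:ℤ) - j) x t * (((n:ℤ) - (j:ℤ) : ℤ) : ℝ) * p ^ ((n:ℤ) - 1 - j)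
        = (n : ℝ) * laxL m u v x t p ^ (n - 1) *
            (1 - ∑ k : Fin m, v k x t / (p * (p + v k x t))) := by
    intro p hp
    refine aux_Sp m n hn u v a x t hvpos' (fun q hq => hLF.abs_summable x t q hq)
      (fun q hq => hLF.expansion x t q hq) p ?_
    rw [hPdef] at hp
    exact hp
  -- the master coefficient function
  set NN : ℤ := (n:ℤ) + ((n-1:ℕ):ℤ) with hNNdef
  set Gc : ℤ → ℝ := fun e =>
    pdt (a e) x t
    - (∑ i ∈ Icc 1 n, (i:ℝ) * a i x t * pdx (a (e + 1 - i)) x t)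
    + (∑ i ∈ Icc 1 n, pdx (a i) x t * ((e - i + 1 : ℤ) : ℝ) * a (e - i + 1) x t) with hGcdef
  have hmaster : ∀ p : ℝ, P < p →
      (Summable fun j : ℕ => |Gc (NN - j) * p ^ (NN - (j:ℤ))|) ∧
      ∑' j : ℕ, Gc (NN - j) * p ^ (NN - (j:ℤ)) = 0 := by
    intro p hp
    have hp0 : (0:ℝ) < p := hP0.trans hp
    have hpne : p ≠ 0 := ne_of_gt hp0
    -- part 1 : the time-derivative series, shifted to level NN
    have habsT := hLF.abs_summable_t x t p (hcond p hp)
    have h1abs : Summable fun j : ℕ => |pdt (a (NN - j)) x t * p ^ (NN - (j:ℤ))| := by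
      rw [hNNdef]
      exact aux_shift_summable (fun e => pdt (a e) x t) (n:ℤ) (n-1) p habsT
    have h1tsum : ∑' j : ℕ, pdt (a (NN - j)) x t * p ^ (NN - (j:ℤ))
        = (n:ℝ) * laxL m u v x t p ^ (n-1) *
          (pdt u x t + ∑ k : Fin m, pdt (v k) x t / (p + v k x t)) := by
      rw [hNNdef,
        aux_shift_tsum (fun e => pdt (a e) x t) (n:ℤ) (n-1) p hvanT habsT]
      exact hT p hp
    -- part 2 : the A·(Lⁿ)ₓ components
    have habsX := hLF.abs_summable_x x t p (hcond p hp)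
    have hX' := hX p hp
    have h2 : ∀ i ∈ Icc 1 n,
        (Summable fun j : ℕ =>
          (i:ℝ) * a i x t * pdx (a (NN - j + 1 - i)) x t * p ^ (NN - (j:ℤ))) ∧
        (Summable fun j : ℕ =>
          |(i:ℝ) * a i x t * pdx (a (NN - j + 1 - i)) x t * p ^ (NN - (j:ℤ))|) ∧
        ∑' j : ℕ, (i:ℝ) * a i x t * pdx (a (NN - j + 1 - i)) x t * p ^ (NN - (j:ℤ))
          = ((i:ℝ) * a i x t * p ^ (i-1)) *
            ((n:ℝ) * laxL m u v x t p ^ (n-1) *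
              (pdx u x t + ∑ k : Fin m, pdx (v k) x t / (p + v k x t))) := by
      intro i hi
      obtain ⟨hi1, hi2⟩ := mem_Icc.mp hi
      have hkey : ∀ j : ℕ, (i:ℝ) * a i x t * pdx (a (NN - j + 1 - i)) x t * p ^ (NN - (j:ℤ))
          = ((i:ℝ) * a i x t * p ^ (i-1)) *
            (pdx (a ((n:ℤ) + ((n-i:ℕ):ℤ) - j)) x t * p ^ ((n:ℤ) + ((n-i:ℕ):ℤ) - (j:ℤ))) := by
        intro j
        have harg : NN - (j:ℤ) + 1 - (i:ℤ) = (n:ℤ) + ((n-i:ℕ):ℤ) - j := by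
          rw [hNNdef]; omega
        have hpow : p ^ (NN - (j:ℤ)) = p ^ ((i-1 : ℕ)) * p ^ ((n:ℤ) + ((n-i:ℕ):ℤ) - (j:ℤ)) := by
          rw [← zpow_natCast p (i-1), ← zpow_add₀ hpne]
          congr 1
          rw [hNNdef]; omega
        rw [harg, hpow]; ring
      have hshift := aux_shift_summable (fun e => pdx (a e) x t) (n:ℤ) (n-i) p habsX
      refine ⟨?_, ?_, ?_⟩
      · exact Summable.congr ((hshift.of_abs).mul_left ((i:ℝ) * a i x t * p ^ (i-1)))
          (fun j => (hkey j).symm)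
      · refine Summable.congr (hshift.mul_left (|(i:ℝ) * a i x t * p ^ (i-1)|)) (fun j => ?_)
        rw [← abs_mul, ← hkey j]
      · rw [tsum_congr hkey, tsum_mul_left,
          aux_shift_tsum (fun e => pdx (a e) x t) (n:ℤ) (n-i) p hvanX habsX, hX']
    -- part 3 : the Bₓ·(Lⁿ)_p components
    have hSp := hS p hp
    have hidx : ∀ j : ℕ, (n:ℤ) - 1 - j + 1 = (n:ℤ) - j := fun j => by ring
    have hdabs : Summable fun j : ℕ =>
        |((((n:ℤ) - 1 - j) + 1 : ℤ) : ℝ) * a ((n:ℤ) - 1 - j + 1) x t * p ^ ((n:ℤ) - 1 - j)| := by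
      refine Summable.congr hSp.1 (fun j => ?_)
      simp only [hidx]
      congr 1
      ring
    have hdtsum : ∑' j : ℕ,
        ((((n:ℤ) - 1 - j) + 1 : ℤ) : ℝ) * a ((n:ℤ) - 1 - j + 1) x t * p ^ ((n:ℤ) - 1 - j)
        = (n : ℝ) * laxL m u v x t p ^ (n - 1) *
            (1 - ∑ k : Fin m, v k x t / (p * (p + v k x t))) := by
      rw [← hSp.2]
      apply tsum_congr
      intro j
      simp only [hidx]
      ring
    have h3 : ∀ i ∈ Icc 1 n,
        (Summable fun j : ℕ =>
          pdx (a i) x t * ((NN - (j:ℤ) - i + 1 : ℤ) : ℝ) * a (NN - j - i + 1) x t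
            * p ^ (NN - (j:ℤ))) ∧
        (Summable fun j : ℕ =>
          |pdx (a i) x t * ((NN - (j:ℤ) - i + 1 : ℤ) : ℝ) * a (NN - j - i + 1) x t
            * p ^ (NN - (j:ℤ))|) ∧
        ∑' j : ℕ, pdx (a i) x t * ((NN - (j:ℤ) - i + 1 : ℤ) : ℝ) * a (NN - j - i + 1) x t
            * p ^ (NN - (j:ℤ))
          = (pdx (a i) x t * p ^ i) *
            ((n : ℝ) * laxL m u v x t p ^ (n - 1) *
              (1 - ∑ k : Fin m, v k x t / (p * (p + v k x t)))) := by
      intro i hi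
      obtain ⟨hi1, hi2⟩ := mem_Icc.mp hi
      set d : ℤ → ℝ := fun e => ((e + 1 : ℤ) : ℝ) * a (e + 1) x t with hddef
      have hvand : ∀ e : ℤ, (n:ℤ) - 1 < e → d e = 0 := by
        intro e he
        simp only [hddef]
        rw [hvanα (e+1) (by omega), mul_zero]
      have hdabs' : Summable fun j : ℕ => |d ((n:ℤ) - 1 - j) * p ^ ((n:ℤ) - 1 - (j:ℤ))| := by
        exact hdabs
      have hkey : ∀ j : ℕ,
          pdx (a i) x t * ((NN - (j:ℤ) - i + 1 : ℤ) : ℝ) * a (NN - j - i + 1) x t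
            * p ^ (NN - (j:ℤ))
          = (pdx (a i) x t * p ^ i) *
            (d ((n:ℤ) - 1 + ((n-i:ℕ):ℤ) - j) * p ^ ((n:ℤ) - 1 + ((n-i:ℕ):ℤ) - (j:ℤ))) := by
        intro j
        have harg : NN - (j:ℤ) - i + 1 = (n:ℤ) - 1 + ((n-i:ℕ):ℤ) - j + 1 := by
          rw [hNNdef]; omega
        have hpow : p ^ (NN - (j:ℤ)) = p ^ (i : ℕ) * p ^ ((n:ℤ) - 1 + ((n-i:ℕ):ℤ) - (j:ℤ)) := by
          rw [← zpow_natCast p i, ← zpow_add₀ hpne]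
          congr 1
          rw [hNNdef]; omega
        simp only [hddef]
        rw [harg, hpow]
        ring
      have hshift := aux_shift_summable d ((n:ℤ)-1) (n-i) p hdabs'
      refine ⟨?_, ?_, ?_⟩
      · exact Summable.congr ((hshift.of_abs).mul_left (pdx (a i) x t * p ^ i))
          (fun j => (hkey j).symm)
      · refine Summable.congr (hshift.mul_left (|pdx (a i) x t * p ^ i|)) (fun j => ?_)
        rw [← abs_mul, ← hkey j]
      · rw [tsum_congr hkey, tsum_mul_left,
          aux_shift_tsum d ((n:ℤ)-1) (n-i) p hvand hdabs']
        rw [hdtsum]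
    -- expand the master term
    have hexpand : ∀ j : ℕ, Gc (NN - j) * p ^ (NN - (j:ℤ))
        = pdt (a (NN - j)) x t * p ^ (NN - (j:ℤ))
          - (∑ i ∈ Icc 1 n,
              (i:ℝ) * a i x t * pdx (a (NN - j + 1 - i)) x t * p ^ (NN - (j:ℤ)))
          + (∑ i ∈ Icc 1 n,
              pdx (a i) x t * ((NN - (j:ℤ) - i + 1 : ℤ) : ℝ) * a (NN - j - i + 1) x t
                * p ^ (NN - (j:ℤ))) := by
      intro j
      simp only [hGcdef]
      rw [add_mul, sub_mul, Finset.sum_mul, Finset.sum_mul]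
    constructor
    · -- absolute summability of the master series
      have hbsum : Summable (fun j : ℕ =>
          |pdt (a (NN - j)) x t * p ^ (NN - (j:ℤ))|
          + ((∑ i ∈ Icc 1 n,
              |(i:ℝ) * a i x t * pdx (a (NN - j + 1 - i)) x t * p ^ (NN - (j:ℤ))|)
            + (∑ i ∈ Icc 1 n,
              |pdx (a i) x t * ((NN - (j:ℤ) - i + 1 : ℤ) : ℝ) * a (NN - j - i + 1) x t
                * p ^ (NN - (j:ℤ))|))) := by
        exact h1abs.add ((summable_sum (fun i hi => (h2 i hi).2.1)).add
          (summable_sum (fun i hi => (h3 i hi).2.1)))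
      refine Summable.of_nonneg_of_le (fun j => abs_nonneg _) (fun j => ?_) hbsum
      rw [hexpand j]
      calc |pdt (a (NN - j)) x t * p ^ (NN - (j:ℤ))
            - (∑ i ∈ Icc 1 n,
                (i:ℝ) * a i x t * pdx (a (NN - j + 1 - i)) x t * p ^ (NN - (j:ℤ)))
            + (∑ i ∈ Icc 1 n,
                pdx (a i) x t * ((NN - (j:ℤ) - i + 1 : ℤ) : ℝ) * a (NN - j - i + 1) x t
                  * p ^ (NN - (j:ℤ)))|
          ≤ |pdt (a (NN - j)) x t * p ^ (NN - (j:ℤ))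
            - (∑ i ∈ Icc 1 n,
                (i:ℝ) * a i x t * pdx (a (NN - j + 1 - i)) x t * p ^ (NN - (j:ℤ)))|
            + |∑ i ∈ Icc 1 n,
                pdx (a i) x t * ((NN - (j:ℤ) - i + 1 : ℤ) : ℝ) * a (NN - j - i + 1) x t
                  * p ^ (NN - (j:ℤ))| := abs_add_le _ _
        _ ≤ (|pdt (a (NN - j)) x t * p ^ (NN - (j:ℤ))|
            + |∑ i ∈ Icc 1 n,
                (i:ℝ) * a i x t * pdx (a (NN - j + 1 - i)) x t * p ^ (NN - (j:ℤ))|)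
            + |∑ i ∈ Icc 1 n,
                pdx (a i) x t * ((NN - (j:ℤ) - i + 1 : ℤ) : ℝ) * a (NN - j - i + 1) x t
                  * p ^ (NN - (j:ℤ))| := by
            gcongr
            exact abs_sub _ _
        _ ≤ |pdt (a (NN - j)) x t * p ^ (NN - (j:ℤ))|
            + ((∑ i ∈ Icc 1 n,
                |(i:ℝ) * a i x t * pdx (a (NN - j + 1 - i)) x t * p ^ (NN - (j:ℤ))|)
              + (∑ i ∈ Icc 1 n,
                |pdx (a i) x t * ((NN - (j:ℤ) - i + 1 : ℤ) : ℝ) * a (NN - j - i + 1) x t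
                  * p ^ (NN - (j:ℤ))|)) := by
            rw [add_assoc]
            gcongr
            · exact Finset.abs_sum_le_sum_abs _ _
            · exact Finset.abs_sum_le_sum_abs _ _
    · -- the master series sums to zero
      have hflow' := hflow x t p (hcond p hp)
      rw [tsum_congr hexpand]
      rw [Summable.tsum_add, Summable.tsum_sub]
      · rw [h1tsum, Summable.tsum_finsetSum (fun i hi => (h2 i hi).1), Summable.tsum_finsetSum (fun i hi => (h3 i hi).1)]
        rw [Finset.sum_congr rfl (fun i hi => (h2 i hi).2.2),
          Finset.sum_congr rfl (fun i hi => (h3 i hi).2.2)]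
        rw [← Finset.sum_mul, ← Finset.sum_mul]
        linear_combination ((n:ℝ) * laxL m u v x t p ^ (n-1)) * hflow'
      · exact (h1abs.of_abs)
      · exact summable_sum (fun i hi => (h2 i hi).1)
      · exact ((h1abs.of_abs).sub (summable_sum (fun i hi => (h2 i hi).1)))
      · exact summable_sum (fun i hi => (h3 i hi).1)
  -- extract the coefficient at exponent n - 1
  have hGzero := aux_coeffs_zero_top Gc NN P hP0
    (fun p hp => (hmaster p hp).1) (fun p hp => (hmaster p hp).2)
  have hGn := hGzero n
  have hNNn : NN - ((n:ℕ):ℤ) = (n:ℤ) - 1 := by rw [hNNdef]; omega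
  rw [hNNn] at hGn
  simp only [hGcdef] at hGn
  have hidx2 : ∀ i : ℕ, (n:ℤ) - 1 + 1 - i = (n:ℤ) - i := fun i => by ring
  have hidx3 : ∀ i : ℕ, (n:ℤ) - 1 - i + 1 = (n:ℤ) - i := fun i => by ring
  simp only [hidx2, hidx3] at hGn
  -- reindex the second sum
  set φ : ℕ → ℝ := fun i => (i:ℝ) * a (i:ℤ) x t * pdx (a ((n:ℤ) - i)) x t with hφdef
  have hS2 : ∑ i ∈ Icc 1 n, pdx (a (i:ℤ)) x t * (((n:ℤ) - (i:ℤ) : ℤ) : ℝ) * a ((n:ℤ) - i) x t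
      = ∑ i ∈ Finset.range n, φ i := by
    apply Finset.sum_nbij' (i := fun i : ℕ => n - i) (j := fun i : ℕ => n - i)
    · intro i hi
      obtain ⟨hi1, hi2⟩ := mem_Icc.mp hi
      rw [Finset.mem_range]
      omega
    · intro i hi
      rw [Finset.mem_range] at hi
      rw [mem_Icc]
      omega
    · intro i hi
      obtain ⟨hi1, hi2⟩ := mem_Icc.mp hi
      omega
    · intro i hi
      rw [Finset.mem_range] at hi
      omega
    · intro i hi
      obtain ⟨hi1, hi2⟩ := mem_Icc.mp hi
      simp only [hφdef]
      have hc1 : ((n - i:ℕ):ℤ) = (n:ℤ) - i := by omega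
      rw [hc1]
      have hc2 : (n:ℤ) - ((n:ℤ) - (i:ℤ)) = (i:ℤ) := by ring
      rw [hc2]
      have hc3 : ((n - i:ℕ):ℝ) = ((n:ℝ) - i) := by
        push_cast [Nat.cast_sub hi2]
        ring
      rw [hc3]
      push_cast
      ring
  have hS1 : ∑ i ∈ Icc 1 n, (i:ℝ) * a (i:ℤ) x t * pdx (a ((n:ℤ) - i)) x t
      = ∑ i ∈ Finset.range (n+1), φ i := by
    apply Finset.sum_subset
    · intro i hi
      obtain ⟨hi1, hi2⟩ := mem_Icc.mp hi
      rw [Finset.mem_range]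
      omega
    · intro i hi hni
      rw [Finset.mem_range] at hi
      rw [mem_Icc] at hni
      have : i = 0 := by omega
      subst this
      simp [hφdef]
  have hφn : φ n = (n:ℝ) * pdx (a 0) x t := by
    simp only [hφdef]
    rw [show (n:ℤ) - (n:ℕ) = (0:ℤ) by omega, hLF.top x t]
    ring
  rw [hS1, hS2, Finset.sum_range_succ, hφn] at hGn
  -- identify pdt (a (n-1)) with n * pdt u
  have han1 := aux_an1 m n hn u v hvpos a hLF
  have hTu : pdt (a ((n:ℤ) - 1)) x t = (n:ℝ) * pdt u x t := by
    have hfun : (fun s => a ((n:ℤ)-1) x s) = fun s => (n:ℝ) * u x s :=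
      funext fun s => han1 x s
    have hd := (aux_diff_t u hu x t).const_mul (n:ℝ)
    simp only [pdt]
    rw [hfun]
    exact hd.deriv
  rw [hTu] at hGn
  have hn0 : (n:ℝ) ≠ 0 := by positivity
  apply mul_left_cancel₀ hn0
  linarith [hGn]
end

section
/- Let m ≥ 1 and let u, v¹, …, vᵐ : ℝ² → ℝ be smooth with v^k ≠ 0 everywhere and v^i ≠ v^j everywhere for i ≠ j. Let C = A + B be the (m+1)×(m+1) matrix with entries α_{11} = u_x, α_{1(j+1)} = v^j_x·(v^j)^{−1}, α_{(j+1)1} = v^j_x, α_{(j+1)(j+1)} = u_x − v^j_x, α_{(i+1)(j+1)} = 0 for i ≠ j, β_{(j+1)(j+1)} = Σ_{k≠j} (v^k_x − v^k·v^j_x·(v^j)^{−1})/(v^k − v^j), β_{(i+1)(j+1)} = (v^i_x − v^i·v^j_x·(v^j)^{−1})/(v^j − v^i) for i ≠ j, and β_{11} = β_{1(j+1)} = β_{(j+1)1} = 0. Then at every point the matrix C applied to the column vector (u, v¹, …, vᵐ) equals the column vector ( u·u_x + v¹_x + ⋯ + vᵐ_x, v¹·u_x + (u − v¹)·v¹_x,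 …, vᵐ·u_x + (u − vᵐ)·vᵐ_x ). In other words, the recursion operator R = C·∂_x^{−1} maps the translational symmetry (u_x, v¹_x, …, vᵐ_x) (with antiderivative (u, v¹, …, vᵐ)) to the right-hand side of the system (W). -/
/-- The `(m+1)×(m+1)` matrix `C = A + B` of the recursion operator
`R = C ∂_x⁻¹`, with the values `Ux = u_x`, `V j = v^j`, `Vx j = v^j_x`
at a given point.  Rows and columns are indexed by `Fin (m+1)`, index `0`
corresponding to `u` and `j.succ` to `v^j`. -/
noncomputable def cMat (m : ℕ) (Ux : ℝ) (V Vx : Fin m → ℝ)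
    (r c : Fin (m + 1)) : ℝ :=
  if hr : r = 0 then
    if hc : c = 0 then Ux
    else Vx (c.pred hc) / V (c.pred hc)
  else
    if hc : c = 0 then Vx (r.pred hr)
    else
      if r.pred hr = c.pred hc then
        (Ux - Vx (r.pred hr)) +
          ∑ k : Fin m, (if k = r.pred hr then 0 else
            (Vx k - V k * Vx (r.pred hr) / V (r.pred hr)) / (V k - V (r.pred hr)))
      else
        (Vx (r.pred hr) - V (r.pred hr) * Vx (c.pred hc) / V (c.pred hc)) /
          (V (c.pred hc) - V (r.pred hr))


private lemma sum_key_stmt10 (m : ℕ) (Ux : ℝ) (V Vx : Fin m → ℝ)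
    (hVne : ∀ k, V k ≠ 0) (hVij : ∀ i j : Fin m, i ≠ j → V i ≠ V j) (j : Fin m) :
    ∑ k : Fin m, (if j = k then
        (Ux - Vx j) + ∑ l : Fin m, (if l = j then 0 else
          (Vx l - V l * Vx j / V j) / (V l - V j))
      else
        (Vx j - V j * Vx k / V k) / (V k - V j)) * V k
    = (Ux - Vx j) * V j := by
  rw [← Finset.add_sum_erase _ _ (Finset.mem_univ j), if_pos rfl]
  have h2 : ∑ l : Fin m, (if l = j then 0 else
      (Vx l - V l * Vx j / V j) / (V l - V j))
      = ∑ l ∈ Finset.univ.erase j, (Vx l - V l * Vx j / V j) / (V l - V j) := by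
    rw [← Finset.add_sum_erase _ _ (Finset.mem_univ j), if_pos rfl, zero_add]
    exact Finset.sum_congr rfl fun l hl => if_neg (Finset.ne_of_mem_erase hl)
  rw [h2]
  have h3 : ∑ k ∈ Finset.univ.erase j,
      (if j = k then
        (Ux - Vx j) + ∑ l ∈ Finset.univ.erase j, (Vx l - V l * Vx j / V j) / (V l - V j)
      else (Vx j - V j * Vx k / V k) / (V k - V j)) * V k
      = ∑ k ∈ Finset.univ.erase j, (Vx j - V j * Vx k / V k) / (V k - V j) * V k := by
    refine Finset.sum_congr rfl fun k hk => ?_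
    rw [if_neg (Ne.symm (Finset.ne_of_mem_erase hk))]
  rw [h3, add_mul, Finset.sum_mul, add_assoc, ← Finset.sum_add_distrib]
  have h4 : ∑ k ∈ Finset.univ.erase j,
      ((Vx k - V k * Vx j / V j) / (V k - V j) * V j +
       (Vx j - V j * Vx k / V k) / (V k - V j) * V k) = 0 := by
    refine Finset.sum_eq_zero fun k hk => ?_
    have hkj : k ≠ j := Finset.ne_of_mem_erase hk
    have h5 : V k - V j ≠ 0 := sub_ne_zero.mpr (hVij k j hkj)
    field_simp [hVne k, hVne j, h5]
    ring
  rw [h4, add_zero]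

/-- the recursion operator `R = C ∂_x⁻¹` maps the translational
symmetry `(u_x, v¹_x, …, vᵐ_x)` (with antiderivative `(u, v¹, …, vᵐ)`) to the
right-hand side of the system (W): at every point, `C` applied to the column
vector `(u, v¹, …, vᵐ)` equals
`(u u_x + v¹_x + ⋯ + vᵐ_x, v¹ u_x + (u - v¹) v¹_x, …, vᵐ u_x + (u - vᵐ) vᵐ_x)`. -/
theorem statement10 (m : ℕ) (hm : 1 ≤ m)
    (u : ℝ → ℝ → ℝ) (v : Fin m → ℝ → ℝ → ℝ)
    (hu : ContDiff ℝ (⊤ : ℕ∞) (fun q : ℝ × ℝ => u q.1 q.2))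
    (hv : ∀ k, ContDiff ℝ (⊤ : ℕ∞) (fun q : ℝ × ℝ => v k q.1 q.2))
    (hvne : ∀ k x t, v k x t ≠ 0)
    (hvij : ∀ i j, i ≠ j → ∀ x t, v i x t ≠ v j x t) :
    ∀ x t : ℝ,
      (∑ c : Fin (m + 1),
          cMat m (pdx u x t) (fun k => v k x t) (fun k => pdx (v k) x t) 0 c *
            Fin.cases (u x t) (fun k => v k x t) c) =
        u x t * pdx u x t + ∑ k : Fin m, pdx (v k) x t ∧
      ∀ j : Fin m,
        (∑ c : Fin (m + 1),
            cMat m (pdx u x t) (fun k => v k x t) (fun k => pdx (v k) x t) j.succ c *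
              Fin.cases (u x t) (fun k => v k x t) c) =
          v j x t * pdx u x t + (u x t - v j x t) * pdx (v j) x t := by
  intro x t
  have hVne : ∀ k : Fin m, v k x t ≠ 0 := fun k => hvne k x t
  have hVij : ∀ i j : Fin m, i ≠ j → v i x t ≠ v j x t := fun i j h => hvij i j h x t
  refine ⟨?_, ?_⟩
  · rw [Fin.sum_univ_succ]
    simp only [Fin.cases_zero, Fin.cases_succ, cMat, dif_pos, Fin.succ_ne_zero, dif_neg,
      not_false_iff, Fin.pred_succ]
    rw [mul_comm]
    congr 1
    exact Finset.sum_congr rfl fun k _ => div_mul_cancel₀ _ (hVne k)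
  · intro j
    rw [Fin.sum_univ_succ]
    simp only [Fin.cases_zero, Fin.cases_succ, cMat, Fin.succ_ne_zero, dif_neg,
      not_false_iff, dif_pos, Fin.pred_succ]
    rw [sum_key_stmt10 m (pdx u x t) (fun k => v k x t) (fun k => pdx (v k) x t) hVne hVij j]
    ring
end

section
/- Let c¹, c², c³, c⁴ : ℝ² → ℝ be smooth with c^i(x,t) ≠ c^j(x,t) for all i ≠ j and all (x,t). Define the 4×4 matrix M = M' + D where M' has entries M'₁₁ = c¹_x, M'_{1k} = −(c¹_x−c^k_x)/(c¹−c^k) for k = 2,3,4; M'_{k1} = 3(c¹_x−c^k_x)/(c¹−c^k) for k = 2,3,4; M'_{kk} = c^k_x − 3(c¹_x−c^k_x)/(c¹−c^k) for k = 2,3,4; M'_{ki} = −(c^k_x−c^i_x)/(c^k−c^i) for k ≠ i, k,i ∈ {2,3,4}; and D is the diagonal matrix with D₁₁ = Σ_{j=2}^4 (c¹_x−c^j_x)/(c¹−c^j) and D_{kk} = Σ_{j=2, j≠k}^4 (c^k_x−c^j_x)/(c^k−c^j) for k = 2,3,4. Then at every point, for each j = 1, 2, 3, 4: Σ_{k=1}^4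 M_{jk}·c^k = c^j·c^j_x + 3c¹_x − c²_x − c³_x − c⁴_x. In other words, the recursion operator R = M·∂_x^{−1} of the m = 3 system maps the translational symmetry (c¹_x, c²_x, c³_x, c⁴_x) (with antiderivative (c¹, c², c³, c⁴)) to the right-hand side of the system. -/
/-- The difference quotient `(f_x - g_x)/(f - g)` appearing in the entries of
the recursion operator. -/
noncomputable def dq (f g : ℝ → ℝ → ℝ) (x t : ℝ) : ℝ :=
  (pdx f x t - pdx g x t) / (f x t - g x t)

/-- Example, `m = 3`: with `M = M' + D` as in the text, the
recursion operator `R = M ∂_x⁻¹` maps the translational symmetry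
`(c¹_x, c²_x, c³_x, c⁴_x)` (with antiderivative `(c¹, c², c³, c⁴)`) to the
right-hand side of the system `c^j_t = c^j c^j_x + 3c¹_x - c²_x - c³_x - c⁴_x`,
`j = 1, 2, 3, 4`. -/
theorem statement15 (c1 c2 c3 c4 : ℝ → ℝ → ℝ)
    (h1 : ContDiff ℝ (⊤ : ℕ∞) (fun q : ℝ × ℝ => c1 q.1 q.2))
    (h2 : ContDiff ℝ (⊤ : ℕ∞) (fun q : ℝ × ℝ => c2 q.1 q.2))
    (h3 : ContDiff ℝ (⊤ : ℕ∞) (fun q : ℝ × ℝ => c3 q.1 q.2))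
    (h4 : ContDiff ℝ (⊤ : ℕ∞) (fun q : ℝ × ℝ => c4 q.1 q.2))
    (h12 : ∀ x t, c1 x t ≠ c2 x t) (h13 : ∀ x t, c1 x t ≠ c3 x t)
    (h14 : ∀ x t, c1 x t ≠ c4 x t) (h23 : ∀ x t, c2 x t ≠ c3 x t)
    (h24 : ∀ x t, c2 x t ≠ c4 x t) (h34 : ∀ x t, c3 x t ≠ c4 x t) :
    ∀ x t : ℝ,
      ((pdx c1 x t + (dq c1 c2 x t + dq c1 c3 x t + dq c1 c4 x t)) * c1 x t +
          (-dq c1 c2 x t) * c2 x t + (-dq c1 c3 x t) * c3 x t +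
          (-dq c1 c4 x t) * c4 x t =
        c1 x t * pdx c1 x t + 3 * pdx c1 x t - pdx c2 x t - pdx c3 x t - pdx c4 x t) ∧
      ((3 * dq c1 c2 x t) * c1 x t +
          (pdx c2 x t - 3 * dq c1 c2 x t + (dq c2 c3 x t + dq c2 c4 x t)) * c2 x t +
          (-dq c2 c3 x t) * c3 x t + (-dq c2 c4 x t) * c4 x t =
        c2 x t * pdx c2 x t + 3 * pdx c1 x t - pdx c2 x t - pdx c3 x t - pdx c4 x t) ∧
      ((3 * dq c1 c3 x t) * c1 x t + (-dq c3 c2 x t) * c2 x t +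
          (pdx c3 x t - 3 * dq c1 c3 x t + (dq c3 c2 x t + dq c3 c4 x t)) * c3 x t +
          (-dq c3 c4 x t) * c4 x t =
        c3 x t * pdx c3 x t + 3 * pdx c1 x t - pdx c2 x t - pdx c3 x t - pdx c4 x t) ∧
      ((3 * dq c1 c4 x t) * c1 x t + (-dq c4 c2 x t) * c2 x t +
          (-dq c4 c3 x t) * c3 x t +
          (pdx c4 x t - 3 * dq c1 c4 x t + (dq c4 c2 x t + dq c4 c3 x t)) * c4 x t =
        c4 x t * pdx c4 x t + 3 * pdx c1 x t - pdx c2 x t - pdx c3 x t - pdx c4 x t) := by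
  intro x t
  have d12 := sub_ne_zero_of_ne (h12 x t)
  have d13 := sub_ne_zero_of_ne (h13 x t)
  have d14 := sub_ne_zero_of_ne (h14 x t)
  have d23 := sub_ne_zero_of_ne (h23 x t)
  have d24 := sub_ne_zero_of_ne (h24 x t)
  have d34 := sub_ne_zero_of_ne (h34 x t)
  have d32 : c3 x t - c2 x t ≠ 0 := sub_ne_zero_of_ne (h23 x t).symm
  have d42 : c4 x t - c2 x t ≠ 0 := sub_ne_zero_of_ne (h24 x t).symm
  have d43 : c4 x t - c3 x t ≠ 0 := sub_ne_zero_of_ne (h34 x t).symm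
  refine ⟨?_, ?_, ?_, ?_⟩ <;> (simp only [dq]; field_simp; ring)
end
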